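/- arXiv:1708.02278 — 7 statements merged into one kernel-verified Lean document; each statement's English description precedes it below -/
import Mathlib

section
/- Let b_1, …, b_r be a T-chain with parameters (d, n, a). Then r − d ≥ 0 and the index n satisfies n ≤ F_{r−d}. -/
/-- Hirzebruch–Jung continued fraction of a list of integers:
`hjcf [] = 0` (junk value), `hjcf (b :: l) = b - 1 / hjcf l`.
Since `(0 : ℚ)⁻¹ = 0`, this gives `hjcf [b] = b`, matching the recursion
`[b_r] = b_r`, `[b_1, …, b_r] = b_1 − 1/[b_2, …, b_r]`. -/
def hjcf : List ℤ → ℚ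
  | [] => 0
  | b :: l => (b : ℚ) - (hjcf l)⁻¹

/-- `IsTChain l d n a` : the nonempty list `l` of integers, all ≥ 2, is a T-chain
with parameters `(d, n, a)`, i.e. its Hirzebruch–Jung continued fraction equals
`d n² / (d n a − 1)` where `d ≥ 1`, `n ≥ 2`, `0 < a < n`, `gcd(n, a) = 1`. -/
def IsTChain (l : List ℤ) (d n a : ℤ) : Prop :=
  l ≠ [] ∧ (∀ b ∈ l, 2 ≤ b) ∧
  1 ≤ d ∧ 2 ≤ n ∧ 0 < a ∧ a < n ∧ Int.gcd n a = 1 ∧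
  hjcf l = (d * n ^ 2 : ℚ) / (d * n * a - 1)

/-!
Write `hjcf l = p / q` in lowest terms (`hjFrac`); for a T-chain `p = d n²` and `q = d n a - 1`.
Reversing a chain keeps `p` and replaces `q` by its inverse modulo `p`, i.e. `a` by `n - a`.
If `n < 2 a`, the chain starts with `2`, and dropping that `2` and lowering the last entry by one
leaves a T-chain with parameters `(d, a, n - a)`. Hence every T-chain is reached from one with
`n = 2`, which has length `d`, by adding one entry per step while `(a, n - a)` runs the Euclidean
algorithm backwards; this growth is at most Fibonacci.
-/

/-- `hjFrac l = (p, q)` with `hjcf l = p / q`, following `[b, l] = b - q / p = (b p - q) / p`. -/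
def hjFrac : List ℤ → ℤ × ℤ
  | [] => (1, 0)
  | b :: l => (b * (hjFrac l).1 - (hjFrac l).2, (hjFrac l).1)

section hjFrac

variable {l t : List ℤ} {b p q q' : ℤ}

theorem hjFrac_cons (b : ℤ) (l : List ℤ) :
    hjFrac (b :: l) = (b * (hjFrac l).1 - (hjFrac l).2, (hjFrac l).1) := rfl

theorem hjFrac_bounds (hl : ∀ x ∈ l, 2 ≤ x) : 0 ≤ (hjFrac l).2 ∧ (hjFrac l).2 < (hjFrac l).1 := by
  induction l with
  | nil => simp [hjFrac]
  | cons b t ih =>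
    have hb : 2 ≤ b := hl b List.mem_cons_self
    obtain ⟨h0, h1⟩ := ih fun x hx => hl x (List.mem_cons_of_mem _ hx)
    simp only [hjFrac_cons]
    constructor <;> nlinarith

theorem one_le_hjFrac_snd (hl : ∀ x ∈ l, 2 ≤ x) (hne : l ≠ []) : 1 ≤ (hjFrac l).2 := by
  obtain _ | ⟨b, t⟩ := l
  · exact absurd rfl hne
  · have := hjFrac_bounds fun x hx => hl x (List.mem_cons_of_mem b hx)
    simp only [hjFrac_cons]
    omega

theorem hjFrac_cons_bounds (hl : ∀ x ∈ t, 2 ≤ x) :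
    (b - 1) * (hjFrac (b :: t)).2 < (hjFrac (b :: t)).1 ∧
      (hjFrac (b :: t)).1 ≤ b * (hjFrac (b :: t)).2 := by
  have := hjFrac_bounds hl
  simp only [hjFrac_cons]
  constructor <;> linarith

theorem hjFrac_cons_sub_one (b : ℤ) (l : List ℤ) :
    hjFrac ((b - 1) :: l) = ((hjFrac (b :: l)).1 - (hjFrac (b :: l)).2, (hjFrac (b :: l)).2) := by
  simp only [hjFrac_cons]
  congr 1
  ring

theorem isCoprime_hjFrac (l : List ℤ) : IsCoprime (hjFrac l).1 (hjFrac l).2 := by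
  induction l with
  | nil => exact isCoprime_one_left
  | cons b t ih =>
    obtain ⟨u, v, huv⟩ := ih
    exact ⟨-v, u + v * b, by simp only [hjFrac_cons]; linear_combination huv⟩

theorem hjcf_eq_div (hl : ∀ x ∈ l, 2 ≤ x) : hjcf l = (hjFrac l).1 / (hjFrac l).2 := by
  induction l with
  | nil => simp [hjcf, hjFrac]
  | cons b t ih =>
    have hlt : ∀ x ∈ t, 2 ≤ x := fun x hx => hl x (List.mem_cons_of_mem _ hx)
    have hp : ((hjFrac t).1 : ℚ) ≠ 0 := by
      have := hjFrac_bounds hlt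
      exact_mod_cast (show (hjFrac t).1 ≠ 0 by omega)
    rw [hjcf, ih hlt, inv_div, hjFrac_cons]
    push_cast
    field_simp

theorem hjFrac_append_singleton (hne : l ≠ []) (c : ℤ) :
    hjFrac (l ++ [c]) =
      (c * (hjFrac l).1 - (hjFrac l.dropLast).1, c * (hjFrac l).2 - (hjFrac l.dropLast).2) := by
  induction l with
  | nil => exact absurd rfl hne
  | cons b m ih =>
    obtain _ | ⟨b', m'⟩ := m
    · simp [hjFrac]
      ring
    · rw [List.cons_append, hjFrac_cons, ih (List.cons_ne_nil _ _),
        List.dropLast_cons_of_ne_nil (List.cons_ne_nil _ _)]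
      simp only [hjFrac_cons b]
      ext <;> ring

theorem hjFrac_reverse (hne : l ≠ []) :
    hjFrac l.reverse = ((hjFrac l).1, (hjFrac l.dropLast).1) := by
  induction l using List.reverseRecOn with
  | nil => exact absurd rfl hne
  | append_singleton m c ih =>
    obtain rfl | hm := eq_or_ne m []
    · simp [hjFrac]
    · rw [List.reverse_append, List.reverse_singleton, List.singleton_append, hjFrac_cons,
        ih hm, List.dropLast_concat, hjFrac_append_singleton hm]

theorem hjFrac_det (hne : l ≠ []) :
    (hjFrac l).2 * (hjFrac l.dropLast).1 - (hjFrac l).1 * (hjFrac l.dropLast).2 = 1 := by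
  induction l with
  | nil => exact absurd rfl hne
  | cons b m ih =>
    obtain _ | ⟨b', m'⟩ := m
    · simp [hjFrac]
    · rw [List.dropLast_cons_of_ne_nil (List.cons_ne_nil _ _), hjFrac_cons b, hjFrac_cons b]
      linear_combination ih (List.cons_ne_nil _ _)

theorem hjFrac_reverse_eq (hl : ∀ x ∈ l, 2 ≤ x) (hne : l ≠ []) (h : hjFrac l = (p, q))
    (hq'0 : 0 ≤ q') (hq'p : q' < p) (hdvd : p ∣ q * q' - 1) : hjFrac l.reverse = (p, q') := by
  have hrev := hjFrac_reverse hne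
  rw [h] at hrev
  rw [hrev, Prod.mk.injEq, eq_self, true_and, ← sub_eq_zero]
  have hbounds := hjFrac_bounds (l := l.reverse) fun x hx => hl x (List.mem_reverse.mp hx)
  rw [hrev] at hbounds
  have hdet := hjFrac_det hne
  rw [h] at hdet
  have hcop : IsCoprime p q := by simpa [h] using isCoprime_hjFrac l
  refine Int.eq_zero_of_abs_lt_dvd (hcop.dvd_of_dvd_mul_left ?_) (abs_sub_lt_iff.mpr ?_)
  · have : q * ((hjFrac l.dropLast).1 - q') = (q * q' - 1) * (-1) + p * (hjFrac l.dropLast).2 := by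
      linear_combination hdet
    rw [this]
    exact dvd_add (dvd_mul_of_dvd_left hdvd _) (dvd_mul_right _ _)
  · simp only at hbounds
    constructor <;> linarith

theorem exists_eq_two_cons_of_lt_two_mul (hl : ∀ x ∈ l, 2 ≤ x) (hne : l ≠ [])
    (h : hjFrac l = (p, q)) (hpq : p < 2 * q) : ∃ t, l = 2 :: t ∧ hjFrac t = (q, 2 * q - p) := by
  obtain _ | ⟨b, t⟩ := l
  · exact absurd rfl hne
  have hlt : ∀ x ∈ t, 2 ≤ x := fun x hx => hl x (List.mem_cons_of_mem b hx)
  obtain ⟨ht0, htq⟩ := hjFrac_bounds hlt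
  rw [hjFrac_cons, Prod.mk.injEq] at h
  obtain ⟨hp, hq⟩ := h
  rw [hq] at hp htq
  have hb : b = 2 := by
    have := hl b List.mem_cons_self
    have : b < 3 := lt_of_mul_lt_mul_right (by linarith : b * q < 3 * q) (by omega)
    omega
  subst hb
  exact ⟨t, rfl, Prod.ext hq (by simp only; omega)⟩

theorem eq_nil_of_hjFrac_fst_eq_one (hl : ∀ x ∈ l, 2 ≤ x) (h : (hjFrac l).1 = 1) : l = [] := by
  by_contra hne
  have := hjFrac_bounds hl
  have := one_le_hjFrac_snd hl hne
  omega

theorem length_eq_of_hjFrac_eq_odd {k : ℤ} (hl : ∀ x ∈ l, 2 ≤ x) (hk : 1 ≤ k)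
    (h : hjFrac l = (2 * k + 1, 2 * k - 1)) : (l.length : ℤ) = k := by
  induction l generalizing k with
  | nil => simp only [hjFrac, Prod.mk.injEq] at h; omega
  | cons b t ih =>
    obtain rfl | hk := hk.eq_or_lt
    · have ht1 : (hjFrac t).1 = 1 := by rw [hjFrac_cons, Prod.mk.injEq] at h; omega
      simp [eq_nil_of_hjFrac_fst_eq_one (fun x hx => hl x (List.mem_cons_of_mem b hx)) ht1]
    · obtain ⟨t', heq, ht'⟩ :=
        exists_eq_two_cons_of_lt_two_mul hl (List.cons_ne_nil b t) h (by omega)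
      obtain ⟨-, rfl⟩ := List.cons_eq_cons.mp heq
      have := ih (k := k - 1) (fun x hx => hl x (List.mem_cons_of_mem b hx)) (by omega)
        (by rw [ht']; ext <;> simp only <;> ring)
      simp only [List.length_cons, Nat.cast_add, Nat.cast_one, this]
      ring

theorem length_eq_of_hjFrac_eq_four_mul {d : ℤ} (hl : ∀ x ∈ l, 2 ≤ x) (hd : 1 ≤ d)
    (h : hjFrac l = (4 * d, 2 * d - 1)) : (l.length : ℤ) = d := by
  obtain _ | ⟨b, t⟩ := l
  · simp only [hjFrac, Prod.mk.injEq] at h; omega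
  have hlt : ∀ x ∈ t, 2 ≤ x := fun x hx => hl x (List.mem_cons_of_mem b hx)
  obtain ⟨hlo, hhi⟩ := hjFrac_cons_bounds (b := b) hlt
  rw [h] at hlo hhi
  simp only at hlo hhi
  rw [hjFrac_cons, Prod.mk.injEq] at h
  obtain ⟨hp, hq⟩ := h
  obtain rfl | hd := hd.eq_or_lt
  · simp [eq_nil_of_hjFrac_fst_eq_one hlt (by omega)]
  · have hb : b = 3 := by
      have := hl b List.mem_cons_self
      have : b ≤ 3 := by nlinarith
      have : 3 ≤ b := by nlinarith
      omega
    subst hb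
    have := length_eq_of_hjFrac_eq_odd (k := d - 1) hlt (by omega)
      (Prod.ext (by simp only; omega) (by simp only; omega))
    simp only [List.length_cons, Nat.cast_add, Nat.cast_one, this]
    ring

theorem hjcf_eq_div_iff (hl : ∀ x ∈ l, 2 ≤ x) (hne : l ≠ []) (hpq : IsCoprime p q) (hq : 0 < q) :
    hjcf l = p / q ↔ hjFrac l = (p, q) := by
  rw [hjcf_eq_div hl]
  refine ⟨fun h => ?_, fun h => by rw [h]⟩
  obtain ⟨h1, h2⟩ := Rat.div_int_inj (one_le_hjFrac_snd hl hne) hq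
    (Int.isCoprime_iff_gcd_eq_one.mp (isCoprime_hjFrac l)) (Int.isCoprime_iff_gcd_eq_one.mp hpq) h
  exact Prod.ext h1 h2

end hjFrac

theorem isTChain_iff {l : List ℤ} {d n a : ℤ} :
    IsTChain l d n a ↔ l ≠ [] ∧ (∀ b ∈ l, 2 ≤ b) ∧ 1 ≤ d ∧ 2 ≤ n ∧ 0 < a ∧ a < n ∧
      IsCoprime n a ∧ hjFrac l = (d * n ^ 2, d * n * a - 1) := by
  rw [IsTChain, ← Int.isCoprime_iff_gcd_eq_one]
  refine and_congr_right fun hne => and_congr_right fun hl => ?_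
  constructor
  · rintro ⟨hd, hn, ha, han, hcop, h⟩
    have hdn : 2 ≤ d * n := by nlinarith
    have hq : 0 < d * n * a - 1 := by nlinarith
    refine ⟨hd, hn, ha, han, hcop, (hjcf_eq_div_iff hl hne ?_ hq).mp (by push_cast; exact h)⟩
    exact ⟨d * a ^ 2, -(d * n * a + 1), by ring⟩
  · rintro ⟨hd, hn, ha, han, hcop, h⟩
    refine ⟨hd, hn, ha, han, hcop, ?_⟩
    rw [hjcf_eq_div hl, h]
    push_cast
    rfl

namespace IsTChain

variable {l : List ℤ} {d n a : ℤ}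

theorem reverse (h : IsTChain l d n a) : IsTChain l.reverse d n (n - a) := by
  obtain ⟨hne, hl, hd, hn, ha, han, hcop, hf⟩ := isTChain_iff.mp h
  have hdn : 2 ≤ d * n := by nlinarith
  have hdna : 1 ≤ d * n * (n - a) := by nlinarith
  refine isTChain_iff.mpr ⟨by simpa using hne, by simpa using hl, hd, hn, by omega, by omega, ?_,
    hjFrac_reverse_eq hl hne hf (by omega) (by nlinarith) ⟨d * n * a - d * a ^ 2 - 1, by ring⟩⟩
  obtain ⟨u, v, huv⟩ := hcop
  exact ⟨u + v, -v, by linear_combination huv⟩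

/-- Drop the leading `2` and lower the last entry by one. -/
theorem exists_shorter_of_lt_two_mul (h : IsTChain l d n a) (hna : n < 2 * a) :
    ∃ l', IsTChain l' d a (n - a) ∧ l.length = l'.length + 1 := by
  obtain ⟨hne, hl, hd, hn, ha, han, hcop, hf⟩ := isTChain_iff.mp h
  have hda : 1 ≤ d * a := one_le_mul_of_one_le_of_one_le hd ha
  have hdan : 1 ≤ d * a * (n - a) := one_le_mul_of_one_le_of_one_le hda (by omega)
  have hdn : 3 ≤ d * n := by nlinarith
  have hdn2 : 3 ≤ d * n * (2 * a - n) := by nlinarith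
  obtain ⟨t, rfl, ht⟩ := exists_eq_two_cons_of_lt_two_mul hl hne hf (by nlinarith)
  have hlt : ∀ x ∈ t, 2 ≤ x := fun x hx => hl x (List.mem_cons_of_mem 2 hx)
  have htne : t ≠ [] := by
    rintro rfl
    simp only [hjFrac, Prod.mk.injEq] at ht
    nlinarith
  have htr := hjFrac_reverse_eq hlt htne ht (q' := d * a * (n - a) - 1) (by omega) (by nlinarith)
    ⟨d * (n - a) * (2 * a - n) - 1, by ring⟩
  obtain ⟨x, s, hxs⟩ := List.exists_cons_of_ne_nil (List.reverse_ne_nil_iff.mpr htne)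
  rw [hxs] at htr
  have hxsl : ∀ y ∈ x :: s, 2 ≤ y := fun y hy => hlt y (List.mem_reverse.mp (hxs ▸ hy))
  have hx : 3 ≤ x := by
    have hhi := (hjFrac_cons_bounds (b := x) fun y hy => hxsl y (List.mem_cons_of_mem x hy)).2
    rw [htr] at hhi
    have : 2 < x := lt_of_mul_lt_mul_right (by nlinarith : 2 * (d * a * (n - a) - 1) < x * _)
      (by omega)
    omega
  refine ⟨(x - 1) :: s, isTChain_iff.mpr ⟨List.cons_ne_nil _ _, ?_, hd, by omega, by omega,
    by omega, ?_, ?_⟩, ?_⟩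
  · simp only [List.mem_cons, forall_eq_or_imp]
    exact ⟨by omega, fun y hy => hxsl y (List.mem_cons_of_mem x hy)⟩
  · obtain ⟨u, v, huv⟩ := hcop
    exact ⟨u + v, u, by linear_combination huv⟩
  · rw [hjFrac_cons_sub_one, htr]
    congr 1
    ring
  · have := congrArg List.length hxs
    simp only [List.length_reverse, List.length_cons] at this ⊢
    omega

theorem exists_shorter (h : IsTChain l d n a) (hn : n ≠ 2) :
    ∃ l' m, IsTChain l' d m (n - m) ∧ l.length = l'.length + 1 ∧ (m = a ∨ m = n - a) := by
  obtain ⟨-, -, -, -, ha, -, hcop, -⟩ := isTChain_iff.mp h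
  have h2a : 2 * a ≠ n := by
    rintro rfl
    obtain rfl | rfl := Int.isUnit_iff.mp (isCoprime_self.mp hcop.of_mul_left_right)
    · exact hn rfl
    · omega
  rcases lt_or_gt_of_ne h2a with hlt | hgt
  · obtain ⟨l', h', hlen⟩ := h.reverse.exists_shorter_of_lt_two_mul (by omega)
    exact ⟨l', n - a, by simpa using h', by simpa using hlen, Or.inr rfl⟩
  · obtain ⟨l', h', hlen⟩ := h.exists_shorter_of_lt_two_mul hgt
    exact ⟨l', a, h', hlen, Or.inl rfl⟩

theorem length_eq_of_two (h : IsTChain l d 2 a) : (l.length : ℤ) = d := by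
  obtain ⟨-, hl, hd, -, ha, ha2, -, hf⟩ := isTChain_iff.mp h
  obtain rfl : a = 1 := by omega
  exact length_eq_of_hjFrac_eq_four_mul hl hd (by rw [hf]; ext <;> simp only <;> ring)

theorem exists_fib_bounds (h : IsTChain l d n a) :
    ∃ k : ℕ, (l.length : ℤ) = d + k ∧ n ≤ Nat.fib (k + 3) ∧ a ≤ Nat.fib (k + 2) ∧
      n - a ≤ Nat.fib (k + 2) := by
  induction hr : l.length using Nat.strong_induction_on generalizing l n a with
  | _ r ih =>
  by_cases hn : n = 2
  · subst hn
    have := h.length_eq_of_two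
    obtain ⟨-, -, -, -, ha, ha2, -⟩ := isTChain_iff.mp h
    obtain rfl : a = 1 := by omega
    exact ⟨0, by omega, by norm_num [Nat.fib_add_two]⟩
  · obtain ⟨l', m, h', hlen, hm⟩ := h.exists_shorter hn
    obtain ⟨k, hk, hmk, hnm, -⟩ := ih l'.length (by omega) h' rfl
    have hfib : (Nat.fib (k + 4) : ℤ) = Nat.fib (k + 2) + Nat.fib (k + 3) := by
      exact_mod_cast Nat.fib_add_two
    have hmono : (Nat.fib (k + 2) : ℤ) ≤ Nat.fib (k + 3) := by exact_mod_cast Nat.fib_le_fib_succ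
    refine ⟨k + 1, by push_cast; omega, ?_⟩
    rw [show k + 1 + 3 = k + 4 by ring, show k + 1 + 2 = k + 3 by ring]
    omega

end IsTChain

/-- For a T-chain with parameters (d, n, a) of length r,
one has r − d ≥ 0 and n ≤ F_{r−d}, where F_i = Nat.fib (i + 3). -/
theorem tchain_index_le_fib (l : List ℤ) (d n a : ℤ) (h : IsTChain l d n a) :
    d ≤ (l.length : ℤ) ∧ n ≤ (Nat.fib (((l.length : ℤ) - d).toNat + 3) : ℤ) := by
  obtain ⟨k, hk, hn, -⟩ := h.exists_fib_bounds
  obtain rfl : ((l.length : ℤ) - d).toNat = k := by omega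
  exact ⟨by omega, hn⟩
end

section
/- For every integer r ≥ 2, let k = ⌈(r−2)/2⌉ and l = ⌊(r−2)/2⌋. Then the chain consisting of k entries equal to 3, followed by one entry 5, followed by l entries equal to 3, followed by one entry 2 (a list of length r of the form [3, …, 3, 5, 3, …, 3, 2]) has Hirzebruch–Jung continued fraction equal to F_{r−1}² / (F_{r−1}·F_{r−3} − 1); hence it is a T-chain with parameters (d, n, a) = (1, F_{r−1}, F_{r−3}), attaining equality n = F_{r−d} in the Fibonacci bound. -/
open List Int

/-- The continuants `(p, q)` with `hjcf l = p / q`; the empty chain gets `(1, 0)`, matching the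
junk value `hjcf [] = 0 = 1 / 0`. -/
def hjNumDen : List ℤ → ℤ × ℤ
  | [] => (1, 0)
  | b :: l => (b * (hjNumDen l).1 - (hjNumDen l).2, (hjNumDen l).1)

theorem hjNumDen_snd_nonneg_and_lt_fst {l : List ℤ} (h : ∀ b ∈ l, 2 ≤ b) :
    0 ≤ (hjNumDen l).2 ∧ (hjNumDen l).2 < (hjNumDen l).1 := by
  induction l with
  | nil => simp [hjNumDen]
  | cons b t ih =>
    obtain ⟨hq, hqp⟩ := ih fun x hx => h x (mem_cons_of_mem b hx)
    have hb : 2 ≤ b := h b mem_cons_self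
    simp only [hjNumDen]
    constructor <;> nlinarith

theorem hjcf_eq_hjNumDen_div {l : List ℤ} (h : ∀ b ∈ l, 2 ≤ b) :
    hjcf l = ((hjNumDen l).1 : ℚ) / (hjNumDen l).2 := by
  induction l with
  | nil => simp [hjNumDen, hjcf]
  | cons b t ih =>
    have ht : ∀ x ∈ t, 2 ≤ x := fun x hx => h x (mem_cons_of_mem b hx)
    have hp : ((hjNumDen t).1 : ℚ) ≠ 0 := by
      have := hjNumDen_snd_nonneg_and_lt_fst ht
      exact_mod_cast (this.1.trans_lt this.2).ne'
    rw [hjcf, ih ht, inv_div, hjNumDen]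
    push_cast
    field_simp

/-- Prepending `3` multiplies by `[[3, -1], [1, 0]]`, whose `k`-th power has entries
`F (2k + 2), F (2k), F (2k - 2)` because `F (n + 4) = 3 F (n + 2) - F n`; `Int.fib` makes the
case `k = 0` (`fib (-2) = -1`) uniform. -/
theorem hjNumDen_replicate_three_append (k : ℕ) (l : List ℤ) :
    hjNumDen (replicate k 3 ++ l) =
      (fib (2 * k + 2) * (hjNumDen l).1 - fib (2 * k) * (hjNumDen l).2,
        fib (2 * k) * (hjNumDen l).1 - fib (2 * k - 2) * (hjNumDen l).2) := by
  induction k with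
  | zero => simp
  | succ k ih =>
    rw [replicate_succ, cons_append, hjNumDen, ih, Prod.mk.injEq]
    push_cast
    constructor <;> grind [fib_add_two]

theorem hjNumDen_replicate_three_two (m : ℕ) :
    hjNumDen (replicate m 3 ++ [2]) = (fib (2 * m + 3), fib (2 * m + 1)) := by
  rw [hjNumDen_replicate_three_append, Prod.mk.injEq]
  simp only [hjNumDen]
  constructor <;> grind [fib_add_two]

theorem Int.fib_succ_mul_fib_pred_sub_fib_sq_of_even {n : ℤ} (hn : Even n) :
    fib (n + 1) * fib (n - 1) - fib n ^ 2 = 1 := by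
  rw [fib_succ_mul_fib_pred_sub_fib_sq, (natAbs_even.2 hn).neg_one_pow]

def fibChain (r : ℕ) : List ℤ :=
  replicate ((r - 1) / 2) 3 ++ 5 :: (replicate ((r - 2) / 2) 3 ++ [2])

theorem length_fibChain {r : ℕ} (hr : 2 ≤ r) : (fibChain r).length = r := by
  simp [fibChain]
  omega

theorem two_le_of_mem_fibChain (r : ℕ) : ∀ b ∈ fibChain r, 2 ≤ b := by
  simp only [fibChain, mem_append, mem_cons, mem_replicate, not_mem_nil, or_false]
  rintro b (⟨-, rfl⟩ | rfl | ⟨-, rfl⟩ | rfl) <;> norm_num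

theorem fibChain_two_mul_add_three (m : ℕ) :
    fibChain (2 * m + 3) = 3 :: fibChain (2 * m + 2) := by
  simp only [fibChain, show (2 * m + 3 - 1) / 2 = m + 1 by omega,
    show (2 * m + 2 - 1) / 2 = m by omega, show (2 * m + 3 - 2) / 2 = m by omega,
    show (2 * m + 2 - 2) / 2 = m by omega, replicate_succ, cons_append]

theorem hjNumDen_fibChain_two_mul_add_two (m : ℕ) :
    hjNumDen (fibChain (2 * m + 2)) =
      (fib (2 * m + 4) ^ 2, fib (2 * m + 4) * fib (2 * m + 2) - 1) := by
  have hk : (2 * m + 2 - 1) / 2 = m := by omega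
  have hl : (2 * m + 2 - 2) / 2 = m := by omega
  have cassini := fib_succ_mul_fib_pred_sub_fib_sq_of_even (even_two_mul (m : ℤ))
  rw [fibChain, hk, hl, hjNumDen_replicate_three_append, hjNumDen, hjNumDen_replicate_three_two,
    Prod.mk.injEq]
  constructor <;> grind [fib_add_two]

theorem hjNumDen_fibChain_two_mul_add_three (m : ℕ) :
    hjNumDen (fibChain (2 * m + 3)) =
      (fib (2 * m + 5) ^ 2, fib (2 * m + 5) * fib (2 * m + 3) - 1) := by
  have cassini := fib_succ_mul_fib_pred_sub_fib_sq_of_even (n := 2 * m + 4) ⟨m + 2, by ring⟩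
  rw [fibChain_two_mul_add_three, hjNumDen, hjNumDen_fibChain_two_mul_add_two, Prod.mk.injEq]
  constructor <;> grind [fib_add_two]

theorem hjNumDen_fibChain {r : ℕ} (hr : 2 ≤ r) :
    hjNumDen (fibChain r) =
      ((Nat.fib (r + 2) : ℤ) ^ 2, (Nat.fib (r + 2) : ℤ) * Nat.fib r - 1) := by
  obtain ⟨m, hm | hm⟩ := Nat.even_or_odd' (r - 2)
  · obtain rfl : r = 2 * m + 2 := by omega
    simp only [← Int.fib_natCast, hjNumDen_fibChain_two_mul_add_two]
    push_cast
    ring_nf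
  · obtain rfl : r = 2 * m + 3 := by omega
    simp only [← Int.fib_natCast, hjNumDen_fibChain_two_mul_add_three]
    push_cast
    ring_nf

theorem Nat.coprime_fib_add_two_fib (n : ℕ) : Coprime (fib (n + 2)) (fib n) := by
  rw [fib_add_two, add_comm, coprime_add_self_left]
  exact (fib_coprime_fib_succ n).symm

/-- For r ≥ 2, with k = ⌈(r−2)/2⌉ and l = ⌊(r−2)/2⌋, the chain
[3^k, 5, 3^l, 2] of length r has HJ continued fraction
F_{r−1}² / (F_{r−1}·F_{r−3} − 1) and is a T-chain with parameters
(1, F_{r−1}, F_{r−3}), attaining n = F_{r−d}.  Here F_i = Nat.fib (i+3), so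
F_{r−1} = Nat.fib (r+2) and F_{r−3} = Nat.fib r. -/
theorem fib_chain_optimal (r : ℕ) (hr : 2 ≤ r) :
    let c : List ℤ := List.replicate ((r - 1) / 2) 3 ++ 5 :: (List.replicate ((r - 2) / 2) 3 ++ [2])
    c.length = r ∧
    hjcf c = ((Nat.fib (r + 2) : ℚ)) ^ 2 / ((Nat.fib (r + 2) : ℚ) * (Nat.fib r : ℚ) - 1) ∧
    IsTChain c 1 (Nat.fib (r + 2) : ℤ) (Nat.fib r : ℤ) := by
  intro c
  change (fibChain r).length = r ∧ hjcf (fibChain r) = _ ∧ IsTChain (fibChain r) 1 _ _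
  have hval : hjcf (fibChain r) =
      ((Nat.fib (r + 2) : ℚ)) ^ 2 / ((Nat.fib (r + 2) : ℚ) * (Nat.fib r : ℚ) - 1) := by
    rw [hjcf_eq_hjNumDen_div (two_le_of_mem_fibChain r), hjNumDen_fibChain hr]
    push_cast
    rfl
  have hfib_pos : 0 < Nat.fib r := Nat.fib_pos.2 (by omega)
  have hfib_lt : Nat.fib r < Nat.fib (r + 2) := by
    rw [Nat.fib_add_two]
    have := Nat.fib_pos.2 (by omega : 0 < r + 1)
    omega
  refine ⟨length_fibChain hr, hval, ?_, two_le_of_mem_fibChain r, le_rfl, by omega, by omega,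
    by omega, ?_, by rw [hval]; push_cast; ring⟩
  · rw [← length_pos_iff_ne_nil, length_fibChain hr]
    omega
  · rw [Int.gcd_natCast_natCast]
    exact Nat.coprime_fib_add_two_fib r
end

section
/- Let b_1, …, b_r be a T-chain with parameters (d, n, a). Then the sum of the entries satisfies b_1 + b_2 + ⋯ + b_r = 3r + 2 − d; equivalently, d = 3r + 2 − Σ_{i=1}^r b_i is determined by the length and the sum of the entries. -/
/-!
Multiplying the matrices `!![bᵢ, -1; 1, 0]` turns a chain into a matrix of determinant `1` whose
first column and first row encode the continued fractions of the chain and of its reversal; for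
a T-chain it is an explicit matrix `T(d, n, a)`. If `n = 2` the chain is `[4]` or
`[3, 2, …, 2, 3]`. If `n ≥ 3`, coprimality rules out `n = 2a`, and after possibly reversing the
chain (which replaces `a` by `n - a`) we have `n < 2a`. Then the chain is `[2, b₂, …, bᵣ]` with
`bᵣ ≥ 3`, and `[b₂, …, bᵣ - 1]` is a T-chain with parameters `(d, a, 2a - n)`: one entry shorter
and with sum smaller by `3`, so `3r + 2 - Σ bᵢ` is unchanged.
-/

open Matrix

namespace HirzebruchJung

def stepMatrix (b : ℤ) : Matrix (Fin 2) (Fin 2) ℤ := !![b, -1; 1, 0]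

/-- `continuantMatrix [b₁, …, bᵣ] = !![P, -X; Q, -Y]` with `[b₁, …, bᵣ] = P / Q` and
`[bᵣ, …, b₁] = P / X`. -/
def continuantMatrix (l : List ℤ) : Matrix (Fin 2) (Fin 2) ℤ := (l.map stepMatrix).prod

@[simp] lemma continuantMatrix_nil : continuantMatrix [] = 1 := rfl

lemma continuantMatrix_cons (b : ℤ) (l : List ℤ) :
    continuantMatrix (b :: l) = stepMatrix b * continuantMatrix l := rfl

lemma continuantMatrix_append (l₁ l₂ : List ℤ) :
    continuantMatrix (l₁ ++ l₂) = continuantMatrix l₁ * continuantMatrix l₂ := by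
  simp [continuantMatrix]

lemma continuantMatrix_cons_zero_zero (b : ℤ) (l : List ℤ) :
    continuantMatrix (b :: l) 0 0 = b * continuantMatrix l 0 0 - continuantMatrix l 1 0 := by
  simp [continuantMatrix_cons, stepMatrix, Matrix.mul_apply, Fin.sum_univ_two]; ring

lemma continuantMatrix_cons_one_zero (b : ℤ) (l : List ℤ) :
    continuantMatrix (b :: l) 1 0 = continuantMatrix l 0 0 := by
  simp [continuantMatrix_cons, stepMatrix, Matrix.mul_apply, Fin.sum_univ_two]

lemma det_continuantMatrix (l : List ℤ) : (continuantMatrix l).det = 1 := by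
  induction l with
  | nil => simp
  | cons b l ih => rw [continuantMatrix_cons, det_mul, ih]; simp [stepMatrix]

def flipTranspose (A : Matrix (Fin 2) (Fin 2) ℤ) : Matrix (Fin 2) (Fin 2) ℤ :=
  !![A 0 0, -A 1 0; -A 0 1, A 1 1]

lemma flipTranspose_mul (A B : Matrix (Fin 2) (Fin 2) ℤ) :
    flipTranspose (A * B) = flipTranspose B * flipTranspose A := by
  ext i j
  fin_cases i <;> fin_cases j <;> simp [flipTranspose, Matrix.mul_apply, Fin.sum_univ_two] <;> ring

lemma continuantMatrix_reverse (l : List ℤ) :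
    continuantMatrix l.reverse = flipTranspose (continuantMatrix l) := by
  induction l with
  | nil => simp [flipTranspose, ← Matrix.one_fin_two]
  | cons b l ih =>
    rw [List.reverse_cons, continuantMatrix_append, ih, continuantMatrix_cons b l,
      flipTranspose_mul]
    congr 1
    simp [continuantMatrix_cons, flipTranspose, stepMatrix]

variable {l : List ℤ}

lemma continuantMatrix_one_zero_bounds (h2 : ∀ b ∈ l, 2 ≤ b) :
    0 ≤ continuantMatrix l 1 0 ∧ continuantMatrix l 1 0 < continuantMatrix l 0 0 := by
  induction l with
  | nil => simp
  | cons b t ih =>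
    obtain ⟨hb, h2t⟩ := List.forall_mem_cons.mp h2
    obtain ⟨hQ, hQP⟩ := ih h2t
    rw [continuantMatrix_cons_zero_zero, continuantMatrix_cons_one_zero]
    constructor <;> nlinarith

lemma continuantMatrix_cons_bounds {b : ℤ} {t : List ℤ} (h2 : ∀ x ∈ t, 2 ≤ x) :
    (b - 1) * continuantMatrix (b :: t) 1 0 < continuantMatrix (b :: t) 0 0 ∧
      continuantMatrix (b :: t) 0 0 ≤ b * continuantMatrix (b :: t) 1 0 := by
  obtain ⟨hQ, hQP⟩ := continuantMatrix_one_zero_bounds h2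
  rw [continuantMatrix_cons_zero_zero, continuantMatrix_cons_one_zero]
  constructor <;> linarith

lemma continuantMatrix_zero_one_bounds (h2 : ∀ b ∈ l, 2 ≤ b) :
    -continuantMatrix l 0 0 < continuantMatrix l 0 1 ∧ continuantMatrix l 0 1 ≤ 0 := by
  have := continuantMatrix_one_zero_bounds (l := l.reverse) (by simpa using h2)
  simp only [continuantMatrix_reverse, flipTranspose, of_apply, cons_val', cons_val_zero,
    cons_val_one, empty_val', cons_val_fin_one] at this
  omega

lemma continuantMatrix_one_zero_pos (h2 : ∀ b ∈ l, 2 ≤ b) (hne : l ≠ []) :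
    0 < continuantMatrix l 1 0 := by
  obtain ⟨b, t, rfl⟩ := List.exists_cons_of_ne_nil hne
  have := continuantMatrix_one_zero_bounds (List.forall_mem_cons.mp h2).2
  rw [continuantMatrix_cons_one_zero]
  omega

lemma isCoprime_continuantMatrix (l : List ℤ) :
    IsCoprime (continuantMatrix l 0 0) (continuantMatrix l 1 0) :=
  ⟨continuantMatrix l 1 1, -continuantMatrix l 0 1, by
    linarith [det_fin_two (continuantMatrix l) ▸ det_continuantMatrix l]⟩

/-- At `l = []` both sides are the junk value `0`. -/
lemma hjcf_eq_div (h2 : ∀ b ∈ l, 2 ≤ b) :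
    hjcf l = continuantMatrix l 0 0 / continuantMatrix l 1 0 := by
  induction l with
  | nil => simp [hjcf]
  | cons b t ih =>
    have h2t := (List.forall_mem_cons.mp h2).2
    have hP : (continuantMatrix t 0 0 : ℚ) ≠ 0 := by
      have := continuantMatrix_one_zero_bounds h2t
      exact_mod_cast (by omega : continuantMatrix t 0 0 ≠ 0)
    rw [hjcf, ih h2t, continuantMatrix_cons_zero_zero, continuantMatrix_cons_one_zero, inv_div]
    field_simp
    push_cast
    ring

lemma eq_of_det_eq_one_of_col_eq {A B : Matrix (Fin 2) (Fin 2) ℤ} (hA : A.det = 1)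
    (hB : B.det = 1) (h00 : A 0 0 = B 0 0) (h10 : A 1 0 = B 1 0)
    (hA01 : -A 0 0 < A 0 1 ∧ A 0 1 ≤ 0) (hB01 : -A 0 0 < B 0 1 ∧ B 0 1 ≤ 0) : A = B := by
  rw [det_fin_two] at hA hB
  have hdiff : A 0 0 * (A 1 1 - B 1 1) = A 1 0 * (A 0 1 - B 0 1) := by
    rw [h00, h10] at hA ⊢; linarith
  have hcop : IsCoprime (A 0 0) (A 1 0) := ⟨A 1 1, -A 0 1, by linarith⟩
  have h01 : A 0 1 = B 0 1 := by
    have hdvd : A 0 0 ∣ A 0 1 - B 0 1 := hcop.dvd_of_dvd_mul_left ⟨_, hdiff.symm⟩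
    have := Int.eq_zero_of_abs_lt_dvd hdvd (abs_lt.mpr ⟨by linarith, by linarith⟩)
    linarith
  have h11 : A 1 1 = B 1 1 := by
    rw [h01, sub_self, mul_zero, mul_eq_zero] at hdiff
    have : A 0 0 ≠ 0 := by linarith
    linarith [hdiff.resolve_left this]
  ext i j
  fin_cases i <;> fin_cases j <;> assumption

lemma two_le_continuantMatrix_cons_zero_zero {b : ℤ} {t : List ℤ}
    (h2 : ∀ x ∈ b :: t, 2 ≤ x) : 2 ≤ continuantMatrix (b :: t) 0 0 := by
  obtain ⟨hb, h2t⟩ := List.forall_mem_cons.mp h2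
  have := continuantMatrix_one_zero_bounds h2t
  have := (continuantMatrix_cons_bounds (b := b) h2t).1
  rw [continuantMatrix_cons_one_zero] at this
  nlinarith

/-- These are the chains `[2, …, 2, 3]`. -/
lemma sum_eq_of_continuantMatrix_sub_eq_two (h2 : ∀ b ∈ l, 2 ≤ b)
    (h : continuantMatrix l 0 0 = continuantMatrix l 1 0 + 2) :
    l.sum = continuantMatrix l 0 0 ∧ 2 * l.length + 1 = continuantMatrix l 0 0 := by
  induction l with
  | nil => simp at h
  | cons b t ih =>
    obtain ⟨hb, h2t⟩ := List.forall_mem_cons.mp h2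
    have hbounds := continuantMatrix_one_zero_bounds h2t
    simp only [continuantMatrix_cons_zero_zero, continuantMatrix_cons_one_zero] at h ⊢
    rcases t with _ | ⟨c, s⟩
    · simp at h ⊢; omega
    · have hPt := two_le_continuantMatrix_cons_zero_zero h2t
      obtain rfl : b = 2 := by nlinarith
      obtain ⟨hsum, hlen⟩ := ih h2t (by linarith)
      simp only [List.sum_cons, List.length_cons] at hsum hlen ⊢
      push_cast at hlen ⊢
      constructor <;> linarith

lemma continuantMatrix_shorten (m : List ℤ) (c : ℤ) :
    continuantMatrix (m ++ [c - 1]) =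
      !![0, 1; -1, 2] * continuantMatrix (2 :: (m ++ [c])) * !![1, 0; 1, 1] := by
  have hhead : !![0, 1; -1, 2] * stepMatrix 2 = 1 := by
    simp [stepMatrix, ← one_fin_two]
  have hlast : stepMatrix c * !![1, 0; 1, 1] = stepMatrix (c - 1) := by
    simp [stepMatrix]; ring_nf
  simp only [continuantMatrix_cons, continuantMatrix_append, continuantMatrix_nil, mul_one,
    ← Matrix.mul_assoc, hhead, Matrix.one_mul]
  rw [Matrix.mul_assoc, hlast]

variable {d n a : ℤ}

/-- The first column is read off from `[b₁, …, bᵣ] = dn² / (dna - 1)`; the second one is the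
unique completion to determinant `1` with `0 ≤ X < P`. -/
def tChainMatrix (d n a : ℤ) : Matrix (Fin 2) (Fin 2) ℤ :=
  !![d * n ^ 2, -(d * n * (n - a) - 1); d * n * a - 1, -(d * a * (n - a) - 1)]

lemma det_tChainMatrix : (tChainMatrix d n a).det = 1 := by
  rw [tChainMatrix, det_fin_two_of]; ring

lemma flipTranspose_tChainMatrix :
    flipTranspose (tChainMatrix d n a) = tChainMatrix d n (n - a) := by
  ext i j
  fin_cases i <;> fin_cases j <;> simp [flipTranspose, tChainMatrix]; ring

lemma tChainMatrix_shorten :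
    tChainMatrix d a (2 * a - n) = !![0, 1; -1, 2] * tChainMatrix d n a * !![1, 0; 1, 1] := by
  ext i j
  fin_cases i <;> fin_cases j <;>
    simp only [tChainMatrix, mul_fin_two, of_apply, cons_val', cons_val_zero, cons_val_one,
      empty_val', cons_val_fin_one, Fin.zero_eta, Fin.mk_one] <;> ring

structure HasTChainMatrix (l : List ℤ) (d n a : ℤ) : Prop where
  two_le : ∀ b ∈ l, 2 ≤ b
  one_le_d : 1 ≤ d
  two_le_n : 2 ≤ n
  pos : 0 < a
  lt : a < n
  isCoprime : IsCoprime n a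
  eq : continuantMatrix l = tChainMatrix d n a

lemma _root_.IsTChain.hasTChainMatrix (h : IsTChain l d n a) : HasTChainMatrix l d n a := by
  obtain ⟨hne, h2, hd, hn, ha, han, hg, hval⟩ := h
  refine ⟨h2, hd, hn, ha, han, Int.isCoprime_iff_gcd_eq_one.mpr hg, ?_⟩
  have hdna : 0 < d * n * a - 1 := by
    have : 2 ≤ n * a := by nlinarith
    nlinarith
  have hcop : IsCoprime (d * n ^ 2) (d * n * a - 1) := ⟨d * a ^ 2, -(d * n * a + 1), by ring⟩
  rw [hjcf_eq_div h2] at hval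
  obtain ⟨h00, h10⟩ := Rat.div_int_inj (continuantMatrix_one_zero_pos h2 hne) hdna
    (Int.isCoprime_iff_gcd_eq_one.mp (isCoprime_continuantMatrix l))
    (Int.isCoprime_iff_gcd_eq_one.mp hcop) (by push_cast; exact hval)
  obtain ⟨hlow, hhigh⟩ := continuantMatrix_zero_one_bounds h2
  refine eq_of_det_eq_one_of_col_eq (det_continuantMatrix l) det_tChainMatrix
    (by simp [tChainMatrix, h00]) (by simp [tChainMatrix, h10]) ⟨hlow, hhigh⟩ ?_
  simp only [tChainMatrix, of_apply, cons_val', cons_val_zero, cons_val_one, empty_val',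
    cons_val_fin_one, h00]
  constructor <;> nlinarith

namespace HasTChainMatrix

lemma reverse (h : HasTChainMatrix l d n a) : HasTChainMatrix l.reverse d n (n - a) where
  two_le b hb := h.two_le b (List.mem_reverse.mp hb)
  one_le_d := h.one_le_d
  two_le_n := h.two_le_n
  pos := by linarith [h.lt]
  lt := by linarith [h.pos]
  isCoprime := by simpa [sub_eq_neg_add] using h.isCoprime.neg_right.add_mul_left_right 1
  eq := by rw [continuantMatrix_reverse, h.eq, flipTranspose_tChainMatrix]

lemma zero_zero (h : HasTChainMatrix l d n a) : continuantMatrix l 0 0 = d * n ^ 2 := by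
  simp [h.eq, tChainMatrix]

lemma one_zero (h : HasTChainMatrix l d n a) : continuantMatrix l 1 0 = d * n * a - 1 := by
  simp [h.eq, tChainMatrix]

lemma ne_nil (h : HasTChainMatrix l d n a) : l ≠ [] := by
  rintro rfl
  have hP := h.zero_zero
  simp only [continuantMatrix_nil, one_apply_eq] at hP
  nlinarith [h.one_le_d, h.two_le_n]

lemma sum_eq_of_n_eq_two (h : HasTChainMatrix l d 2 a) : l.sum = 3 * l.length + 2 - d := by
  obtain rfl : a = 1 := by linarith [h.pos, h.lt]
  have hd := h.one_le_d
  obtain ⟨b, t, rfl⟩ := List.exists_cons_of_ne_nil h.ne_nil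
  have h2t := (List.forall_mem_cons.mp h.two_le).2
  have hP := h.zero_zero
  have hQ := h.one_zero
  obtain ⟨hlow, hhigh⟩ := continuantMatrix_cons_bounds (b := b) h2t
  rw [hP, hQ] at hlow hhigh
  rw [continuantMatrix_cons_zero_zero] at hP
  rw [continuantMatrix_cons_one_zero] at hQ
  simp only [List.sum_cons, List.length_cons]
  push_cast
  obtain rfl | hd2 := (by omega : d = 1 ∨ 2 ≤ d)
  · obtain rfl : b = 4 := by nlinarith
    obtain rfl : t = [] := by
      by_contra hne
      obtain ⟨c, s, rfl⟩ := List.exists_cons_of_ne_nil hne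
      linarith [two_le_continuantMatrix_cons_zero_zero h2t]
    simp
  · obtain rfl : b = 3 := by nlinarith
    obtain ⟨hsum, hlen⟩ := sum_eq_of_continuantMatrix_sub_eq_two h2t (by linarith)
    linarith

lemma head_eq_two {b : ℤ} {t : List ℤ} (h : HasTChainMatrix (b :: t) d n a) (hn : 3 ≤ n)
    (hna : n < 2 * a) : b = 2 := by
  obtain ⟨hb, h2t⟩ := List.forall_mem_cons.mp h.two_le
  obtain ⟨hlow, -⟩ := continuantMatrix_cons_bounds (b := b) h2t
  rw [h.zero_zero, h.one_zero] at hlow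
  have hdn : 3 ≤ d * n := by nlinarith [h.one_le_d]
  have hdna : 0 ≤ d * n * a - 1 := by nlinarith [h.pos]
  by_contra hb2
  nlinarith [mul_le_mul_of_nonneg_right (by omega : 2 ≤ b - 1) hdna,
    mul_le_mul_of_nonneg_left (by omega : 1 ≤ 2 * a - n) (by omega : 0 ≤ d * n)]

lemma three_le_head {c : ℤ} {t : List ℤ} (h : HasTChainMatrix (c :: t) d n a)
    (hna : 2 * a < n) : 3 ≤ c := by
  obtain ⟨hc, h2t⟩ := List.forall_mem_cons.mp h.two_le
  obtain ⟨-, hhigh⟩ := continuantMatrix_cons_bounds (b := c) h2t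
  rw [h.zero_zero, h.one_zero] at hhigh
  have hdn : 0 ≤ d * n := by nlinarith [h.one_le_d, h.two_le_n]
  by_contra hc3
  obtain rfl : c = 2 := by omega
  nlinarith [mul_le_mul_of_nonneg_left (by omega : 2 * a ≤ n - 1) hdn]

lemma exists_shorten (h : HasTChainMatrix l d n a) (hn : 3 ≤ n) (hna : n < 2 * a) :
    ∃ l', HasTChainMatrix l' d a (2 * a - n) ∧ l'.length + 1 = l.length ∧
      l'.sum + 3 = l.sum := by
  obtain ⟨b, t, rfl⟩ := List.exists_cons_of_ne_nil h.ne_nil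
  obtain rfl := h.head_eq_two hn hna
  obtain ⟨m, c, rfl⟩ : ∃ m c, t = m ++ [c] := by
    rcases List.eq_nil_or_concat' t with rfl | ht
    · have hP := h.zero_zero
      simp [continuantMatrix_cons_zero_zero] at hP
      nlinarith [h.one_le_d]
    · exact ht
  have hc : 3 ≤ c := by
    have hrev := h.reverse
    rw [show (2 :: (m ++ [c])).reverse = c :: (m.reverse ++ [2]) by simp] at hrev
    exact hrev.three_le_head (by omega)
  have h2t := (List.forall_mem_cons.mp h.two_le).2
  refine ⟨m ++ [c - 1],
    ⟨?_, h.one_le_d, by omega, by omega, by linarith [h.lt], ?_, ?_⟩, by simp, ?_⟩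
  · intro x hx
    rcases List.mem_append.mp hx with hx | hx
    · exact h2t x (List.mem_append_left _ hx)
    · rw [List.mem_singleton.mp hx]; omega
  · simpa [sub_eq_neg_add, mul_comm] using h.isCoprime.symm.neg_right.add_mul_left_right 2
  · rw [continuantMatrix_shorten, h.eq, tChainMatrix_shorten]
  · simp; ring

lemma sum_eq {l : List ℤ} {n a : ℤ} (h : HasTChainMatrix l d n a) :
    l.sum = 3 * l.length + 2 - d := by
  obtain rfl | hn : n = 2 ∨ 3 ≤ n := by have := h.two_le_n; omega
  · exact h.sum_eq_of_n_eq_two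
  obtain ⟨l', n', a', h', hlen, hsum⟩ : ∃ l' n' a', HasTChainMatrix l' d n' a' ∧
      l'.length + 1 = l.length ∧ l'.sum + 3 = l.sum := by
    rcases lt_trichotomy n (2 * a) with hlt | rfl | hgt
    · obtain ⟨l', h'⟩ := h.exists_shorten hn hlt
      exact ⟨l', _, _, h'⟩
    · have : IsUnit a := isCoprime_self.mp h.isCoprime.of_mul_left_right
      rcases Int.isUnit_iff.mp this with rfl | rfl <;> omega
    · obtain ⟨l', h', hlen, hsum⟩ := h.reverse.exists_shorten hn (by omega)
      exact ⟨l', _, _, h', by simpa using hlen, by simpa using hsum⟩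
  have := h'.sum_eq
  push_cast [← hlen]
  omega
termination_by l.length

end HasTChainMatrix

end HirzebruchJung

/-- For a T-chain with parameters (d, n, a) of length r,
b_1 + ⋯ + b_r = 3r + 2 − d. -/
theorem tchain_sum (l : List ℤ) (d n a : ℤ) (h : IsTChain l d n a) :
    l.sum = 3 * (l.length : ℤ) + 2 - d :=
  h.hasTChainMatrix.sum_eq
end

section
/- Let b_1, …, b_r be a T-chain, and suppose that for some s with 1 ≤ s < r one has b_1 = ⋯ = b_s = 2 and b_{s+1} ≥ 3. Then exactly one of the following holds: (i) b_r = s + 2; (ii) b_{s+1} = 3, b_i = 2 for all s+2 ≤ i ≤ r−1, and b_r = s + 3 (i.e. the chain is [2^s, 3, 2^{r−s−2}, s+3]); (iii) r = s + 1 and b_r = s + 4. -/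
namespace TC

def pc : List ℤ → ℤ
  | [] => 1
  | [b] => b
  | b :: c :: t => b * pc (c :: t) - pc t

def qc : List ℤ → ℤ
  | [] => 0
  | _ :: t => pc t

def pd : List ℤ → ℤ
  | [] => 0
  | [_] => 1
  | b :: c :: t => b * pd (c :: t) - pd t

def qd : List ℤ → ℤ
  | [] => -1
  | _ :: t => pd t

lemma pc_cons (b : ℤ) (t : List ℤ) : pc (b :: t) = b * pc t - qc t := by
  cases t <;> simp [pc, qc]

lemma pd_cons (b : ℤ) (t : List ℤ) : pd (b :: t) = b * pd t - qd t := by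
  cases t <;> simp [pd, qd]

lemma pq_pos : ∀ l : List ℤ, (∀ b ∈ l, 2 ≤ b) → 0 ≤ qc l ∧ qc l < pc l := by
  intro l
  induction l with
  | nil => intro _; simp [pc, qc]
  | cons b t ih =>
    intro hg
    have hb : 2 ≤ b := hg b (by simp)
    have ht := ih (fun x hx => hg x (by simp [hx]))
    rw [pc_cons]
    constructor
    · show (0:ℤ) ≤ pc t; omega
    · show pc t < b * pc t - qc t; nlinarith [ht.1, ht.2]

lemma pc_pos (l : List ℤ) (h : ∀ b ∈ l, 2 ≤ b) : 1 ≤ pc l := by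
  have := pq_pos l h; omega

lemma qc_pos (l : List ℤ) (h : ∀ b ∈ l, 2 ≤ b) (hne : l ≠ []) : 1 ≤ qc l := by
  cases l with
  | nil => simp at hne
  | cons b t =>
    show 1 ≤ pc t
    exact pc_pos t (fun x hx => h x (by simp [hx]))

lemma app : ∀ (u : List ℤ) (x : ℤ), pc (u ++ [x]) = x * pc u - pd u ∧
    qc (u ++ [x]) = x * qc u - qd u ∧ pd (u ++ [x]) = pc u ∧ qd (u ++ [x]) = qc u := by
  intro u
  induction u with
  | nil => intro x; simp [pc, qc, pd, qd]
  | cons b t ih =>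
    intro x
    obtain ⟨h1, h2, h3, h4⟩ := ih x
    refine ⟨?_, ?_, ?_, ?_⟩
    · show pc (b :: (t ++ [x])) = x * pc (b :: t) - pd (b :: t)
      rw [pc_cons, pc_cons, pd_cons, h1]
      show b * (x * pc t - pd t) - qc (t ++ [x]) = _
      rw [h2]; ring
    · show qc (b :: (t ++ [x])) = x * qc (b :: t) - qd (b :: t)
      show pc (t ++ [x]) = x * pc t - pd t
      exact h1
    · show pd (b :: (t ++ [x])) = pc (b :: t)
      rw [pd_cons, pc_cons]
      show b * pd (t ++ [x]) - qd (t ++ [x]) = _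
      rw [h3, h4]
    · show qd (b :: (t ++ [x])) = qc (b :: t)
      show pd (t ++ [x]) = pc t
      exact h3

lemma pd_bounds : ∀ l : List ℤ, (∀ b ∈ l, 2 ≤ b) → 0 ≤ pd l ∧ (l ≠ [] → pd l < pc l) := by
  intro l
  induction l using List.reverseRecOn with
  | nil => intro _; simp [pd, pc]
  | append_singleton u x ih =>
    intro hg
    have hgu : ∀ b ∈ u, 2 ≤ b := fun b hb => hg b (by simp [hb])
    have hx : 2 ≤ x := hg x (by simp)
    obtain ⟨e1, e2, e3, e4⟩ := app u x
    have hu := ih hgu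
    have hpcu : 1 ≤ pc u := pc_pos u hgu
    constructor
    · rw [e3]; omega
    · intro _
      rw [e1, e3]
      rcases eq_or_ne u [] with rfl | hne
      · simp [pd, pc] at *; nlinarith
      · have := hu.2 hne; nlinarith

lemma det : ∀ l : List ℤ, pd l * qc l - pc l * qd l = 1 := by
  intro l
  induction l with
  | nil => simp [pc, qc, pd, qd]
  | cons b t ih =>
    rw [pd_cons, pc_cons]
    show (b * pd t - qd t) * pc t - (b * pc t - qc t) * pd t = 1
    nlinarith [ih]

lemma coprime_pq : ∀ l : List ℤ, IsCoprime (pc l) (qc l) := by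
  intro l
  induction l with
  | nil => simpa [pc, qc] using isCoprime_one_left
  | cons b t ih =>
    rw [pc_cons]
    show IsCoprime (b * pc t - qc t) (pc t)
    obtain ⟨u, v, huv⟩ := ih
    exact ⟨-v, u + v * b, by linarith [huv]⟩

lemma hjcf_pq : ∀ l : List ℤ, (∀ b ∈ l, 2 ≤ b) → hjcf l = (pc l : ℚ) / (qc l : ℚ) := by
  intro l
  induction l with
  | nil => intro _; simp [hjcf, qc]
  | cons b t ih =>
    intro hg
    have ht := ih (fun x hx => hg x (by simp [hx]))
    have hpc : 1 ≤ pc t := pc_pos t (fun x hx => hg x (by simp [hx]))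
    have hpcQ : (pc t : ℚ) ≠ 0 := by exact_mod_cast (by omega : pc t ≠ 0)
    show (b : ℚ) - (hjcf t)⁻¹ = ((pc (b :: t) : ℤ) : ℚ) / ((qc (b :: t) : ℤ) : ℚ)
    rw [ht, inv_div, pc_cons]
    show (b : ℚ) - (qc t : ℚ) / (pc t : ℚ) = ((b * pc t - qc t : ℤ) : ℚ) / ((pc t : ℤ) : ℚ)
    push_cast
    field_simp

lemma qc_cons (b : ℤ) (t : List ℤ) : qc (b :: t) = pc t := rfl
lemma qd_cons (b : ℤ) (t : List ℤ) : qd (b :: t) = pd t := rfl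
lemma pc_nil : pc [] = 1 := rfl
lemma qc_nil : qc [] = 0 := rfl

set_option maxHeartbeats 1000000 in
lemma master {l : List ℤ} {d n a : ℤ} (h : IsTChain l d n a) :
    pc l = d * n ^ 2 ∧ qc l = d * n * a - 1 ∧
    pd l = d * n * (n - a) - 1 ∧ qd l = d * a * (n - a) - 1 := by
  obtain ⟨hne, hg, hd, hn, ha0, han, hgcd, hv⟩ := h
  have hdn : 2 ≤ d * n := by nlinarith
  have hA : 1 ≤ d * n * a - 1 := by nlinarith
  have hN : 4 ≤ d * n ^ 2 := by nlinarith
  have hq1 : 1 ≤ qc l := qc_pos l hg hne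
  have hcop : IsCoprime (d * n ^ 2) (d * n * a - 1) :=
    ⟨-(d * a * (n - a) - 1), d * n * (n - a) - 1, by ring⟩
  have hcross : pc l * (d * n * a - 1) = d * n ^ 2 * qc l := by
    rw [hjcf_pq l hg] at hv
    have hq0 : ((qc l : ℤ) : ℚ) ≠ 0 := by
      exact_mod_cast (by omega : (qc l : ℤ) ≠ 0)
    have hA0 : ((d : ℚ) * n * a - 1) ≠ 0 := by
      have h1 : ((d * n * a - 1 : ℤ) : ℚ) ≠ 0 := by
        exact_mod_cast (by omega : d * n * a - 1 ≠ 0)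
      push_cast at h1
      intro hc; exact h1 (by linarith)
    rw [div_eq_div_iff hq0 hA0] at hv
    push_cast at hv
    exact_mod_cast hv
  have hqA : qc l = d * n * a - 1 := by
    have h1 : qc l ∣ d * n * a - 1 :=
      (coprime_pq l).symm.dvd_of_dvd_mul_left ⟨d * n ^ 2, by linarith⟩
    have h2 : d * n * a - 1 ∣ qc l :=
      hcop.symm.dvd_of_dvd_mul_left ⟨pc l, by linarith⟩
    exact Int.dvd_antisymm (by omega) (by omega) h1 h2
  have hpN : pc l = d * n ^ 2 := by
    have h2 := hcross
    rw [hqA] at h2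
    exact mul_right_cancel₀ (by omega : d * n * a - 1 ≠ 0) h2
  refine ⟨hpN, hqA, ?_⟩
  have hdet := det l
  rw [hpN, hqA] at hdet
  have hkey : (d * n * (n - a) - 1) * (d * n * a - 1) - d * n ^ 2 * (d * a * (n - a) - 1) = 1 := by ring
  have hdvd : d * n ^ 2 ∣ (pd l - (d * n * (n - a) - 1)) * (d * n * a - 1) := by
    refine ⟨qd l - (d * a * (n - a) - 1), ?_⟩
    linear_combination hdet - hkey
  have hdvd2 : d * n ^ 2 ∣ pd l - (d * n * (n - a) - 1) :=
    hcop.dvd_of_dvd_mul_right hdvd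
  have hpdb := pd_bounds l hg
  have hpdlt : pd l < d * n ^ 2 := by rw [← hpN]; exact hpdb.2 hne
  have hpd0 : 0 ≤ pd l := hpdb.1
  have hxlo : 1 ≤ d * n * (n - a) - 1 := by nlinarith
  have hxhi : d * n * (n - a) - 1 < d * n ^ 2 := by nlinarith
  have hpdx : pd l = d * n * (n - a) - 1 := by
    obtain ⟨k, hk⟩ := hdvd2
    rcases lt_trichotomy k 0 with hk0 | hk0 | hk0
    · nlinarith [mul_le_mul_of_nonneg_left (by omega : k ≤ -1) (by omega : (0:ℤ) ≤ d * n ^ 2)]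
    · rw [hk0, mul_zero] at hk; omega
    · nlinarith [mul_le_mul_of_nonneg_left (by omega : 1 ≤ k) (by omega : (0:ℤ) ≤ d * n ^ 2)]
  refine ⟨hpdx, ?_⟩
  rw [hpdx] at hdet
  have h0 : d * n ^ 2 * (qd l - (d * a * (n - a) - 1)) = 0 := by linear_combination hkey - hdet
  rcases mul_eq_zero.mp h0 with h0 | h0
  · omega
  · linarith

set_option maxHeartbeats 1000000 in
lemma stripL {m : List ℤ} {d n a : ℤ} (hm : m ≠ []) (h : IsTChain (2 :: m) d n a) :
    3 ≤ m.getLast hm ∧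
    IsTChain (m.dropLast ++ [m.getLast hm - 1]) d a (2 * a - n) := by
  obtain ⟨hM1, hM2, hM3, hM4⟩ := master h
  obtain ⟨hne, hg, hd, hn, ha0, han, hgcd, hv⟩ := h
  have hgm : ∀ b ∈ m, 2 ≤ b := fun b hb => hg b (by simp [hb])
  have hgm' : ∀ b ∈ m.dropLast, 2 ≤ b := fun b hb => hgm b ((List.dropLast_sublist m).subset hb)
  -- continuants of m
  have hpcm : pc m = d * n * a - 1 := by rw [← qc_cons 2 m]; exact hM2
  have hqcm : qc m = 2 * (d * n * a - 1) - d * n ^ 2 := by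
    have := pc_cons 2 m; rw [hM1, hpcm] at this; linarith
  have hpdm : pd m = d * a * (n - a) - 1 := by rw [← qd_cons 2 m]; exact hM4
  have hqdm : qd m = 2 * (d * a * (n - a) - 1) - (d * n * (n - a) - 1) := by
    have := pd_cons 2 m; rw [hM3, hpdm] at this; linarith
  -- basic inequalities
  have hdn : 2 ≤ d * n := by nlinarith
  have hqm0 : 0 ≤ qc m := (pq_pos m hgm).1
  have h2an : n < 2 * a := by
    by_contra hc
    push_neg at hc
    have : d * n * (2 * a - n) ≤ 0 := by nlinarith
    nlinarith
  have ha2 : 2 ≤ a := by nlinarith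
  -- decompose m = m.dropLast ++ [e]
  have hdec := (List.dropLast_append_getLast hm).symm
  set m' := m.dropLast with hm'
  set e := m.getLast hm with he
  obtain ⟨a1, a2, a3, a4⟩ := app m' e
  rw [← hdec] at a1 a2 a3 a4
  have hpcm' : pc m' = d * a * (n - a) - 1 := by rw [← a3]; exact hpdm
  have hqcm' : qc m' = d * (n - a) * (2 * a - n) - 1 := by
    rw [← a4, hqdm]; ring
  have hpcm'pos : 1 ≤ pc m' := pc_pos m' hgm'
  have hpdm'0 : 0 ≤ pd m' := (pd_bounds m' hgm').1
  -- e ≥ 3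
  have hee : 2 * pc m' < pc m := by
    rw [hpcm, hpcm']
    have h1 : 1 ≤ d * a := by nlinarith
    have h2 : 1 ≤ 2 * a - n := by omega
    have h3 : 1 ≤ d * a * (2 * a - n) := by nlinarith
    nlinarith
  have he3 : 3 ≤ e := by
    by_contra hc
    push_neg at hc
    have : e * pc m' ≤ 2 * pc m' := by nlinarith
    nlinarith
  -- new chain continuants
  obtain ⟨b1, b2, _, _⟩ := app m' (e - 1)
  have hpcc : pc (m' ++ [e - 1]) = d * a ^ 2 := by
    rw [b1]
    have : pd m' = e * pc m' - pc m := by linarith [a1]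
    rw [this, hpcm, hpcm']; ring
  have hqcc : qc (m' ++ [e - 1]) = d * a * (2 * a - n) - 1 := by
    rw [b2]
    have : qd m' = e * qc m' - qc m := by linarith [a2]
    rw [this, hqcm, hqcm']; ring
  -- coprimality of a and 2a - n
  have hcopna : IsCoprime n a := Int.isCoprime_iff_gcd_eq_one.mpr hgcd
  have hcop' : IsCoprime a (2 * a - n) := by
    obtain ⟨u, v, huv⟩ := hcopna
    exact ⟨v + 2 * u, -u, by linarith [huv]⟩
  refine ⟨he3, ?_, ?_, hd, ha2, by omega, by omega, Int.isCoprime_iff_gcd_eq_one.mp hcop', ?_⟩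
  · simp
  · intro b hb
    rcases List.mem_append.mp hb with hb | hb
    · exact hgm' b hb
    · simp at hb; omega
  · rw [hjcf_pq _ (by
      intro b hb
      rcases List.mem_append.mp hb with hb | hb
      · exact hgm' b hb
      · simp at hb; omega)]
    rw [hpcc, hqcc]
    push_cast
    ring_nf

lemma getD_last {l : List ℤ} (hne : l ≠ []) : l.getD (l.length - 1) 0 = l.getLast hne := by
  have h1 : l.length - 1 < l.length := by
    have : l.length ≠ 0 := by simpa using hne
    omega
  rw [List.getD_eq_getElem _ _ h1, List.getLast_eq_getElem]

lemma strip : ∀ (s : ℕ) (l : List ℤ) (d n a : ℤ), IsTChain l d n a → s + 1 ≤ l.length →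
    (∀ i < s, l.getD i 0 = 2) →
    ∃ d' n' a', IsTChain (l.dropLast.drop s ++ [l.getD (l.length - 1) 0 - (s : ℤ)]) d' n' a' := by
  intro s
  induction s with
  | zero =>
    intro l d n a h _ _
    refine ⟨d, n, a, ?_⟩
    have hne := h.1
    have heq : l.dropLast.drop 0 ++ [l.getD (l.length - 1) 0 - ((0 : ℕ) : ℤ)] = l := by
      rw [List.drop_zero, getD_last hne]
      simpa using List.dropLast_append_getLast hne
    rw [heq]; exact h
  | succ s ih =>
    intro l d n a h hlen h2
    have hne := h.1
    have hg := h.2.1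
    cases l with
    | nil => exact absurd rfl hne
    | cons b m =>
      have hb : b = 2 := by have := h2 0 (by omega); simpa using this
      subst hb
      have hmne : m ≠ [] := by
        have : 1 ≤ m.length := by simp at hlen; omega
        exact List.ne_nil_of_length_pos (by omega)
      obtain ⟨he3, hT⟩ := stripL hmne h
      set l₁ := m.dropLast ++ [m.getLast hmne - 1] with hl₁
      have hlen₁ : l₁.length = m.length := by
        simp [hl₁, List.length_dropLast]
        have : 1 ≤ m.length := List.length_pos_iff.mpr hmne
        omega
      have h2' : ∀ i < s, l₁.getD i 0 = 2 := by
        intro i hi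
        have him : i < m.dropLast.length := by
          rw [List.length_dropLast]
          simp at hlen; omega
        have hil : i < l₁.length := by rw [hlen₁]; simp at hlen; omega
        rw [List.getD_eq_getElem _ _ hil]
        have e1 : l₁[i] = m.dropLast[i] := List.getElem_append_left him
        rw [e1, List.getElem_dropLast]
        have : m[i] = (2 :: m).getD (i + 1) 0 := by
          rw [List.getD_eq_getElem _ _ (by simp; omega)]
          simp
        rw [List.getElem_dropLast] at *
        rw [this]
        exact h2 (i + 1) (by omega)
      obtain ⟨d', n', a', hres⟩ := ih l₁ d a (2 * a - n) hT (by rw [hlen₁]; simp at hlen; omega) h2'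
      refine ⟨d', n', a', ?_⟩
      have e2 : l₁.dropLast = m.dropLast := by
        rw [hl₁]; exact List.dropLast_concat ..
      have e3 : l₁.getD (l₁.length - 1) 0 = m.getLast hmne - 1 := by
        rw [getD_last (by simp [hl₁] : l₁ ≠ [])]
        simp only [hl₁, List.getLast_append]
        simp
      have e4 : (2 :: m).getD ((2 :: m).length - 1) 0 = m.getLast hmne := by
        rw [getD_last (by simp : (2 : ℤ) :: m ≠ [])]
        exact List.getLast_cons hmne
      have e5 : (2 :: m).dropLast.drop (s + 1) = m.dropLast.drop s := by
        rw [List.dropLast_cons_of_ne_nil hmne, List.drop_succ_cons]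
      rw [e2, e3] at hres
      rw [e4, e5]
      have : m.getLast hmne - 1 - (s : ℤ) = m.getLast hmne - ((s : ℕ) + 1 : ℕ) := by push_cast; ring
      rw [← this]
      exact hres

lemma single {c d n a : ℤ} (h : IsTChain [c] d n a) : c = 4 := by
  obtain ⟨hpc, hqc, -, -⟩ := master h
  obtain ⟨-, -, hd, hn, ha0, han, -, -⟩ := h
  have h1 : pc [c] = c := by rw [pc_cons, qc_nil, pc_nil]; ring
  have h2 : qc [c] = 1 := by rw [qc_cons, pc_nil]
  rw [h1] at hpc
  rw [h2] at hqc
  have hdna : d * n * a = 2 := by omega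
  have hda : d * a = 1 := by nlinarith
  have hd1 : d = 1 := by nlinarith
  have ha1 : a = 1 := by nlinarith
  have hn2 : n = 2 := by rw [hd1, ha1] at hdna; omega
  rw [hpc, hd1, hn2]; ring

lemma shape (l : List ℤ) : ∀ (k : ℕ), (∀ b ∈ l, 2 ≤ b) → pc l = 2 * (k : ℤ) + 3 →
    qc l = 2 * (k : ℤ) + 1 → l = List.replicate k 2 ++ [3] := by
  induction l with
  | nil => intro k _ _ hq; rw [qc_nil] at hq; omega
  | cons b t ih =>
    intro k hg hp hq
    have hb2 : 2 ≤ b := hg b (by simp)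
    have hgt : ∀ x ∈ t, 2 ≤ x := fun x hx => hg x (by simp [hx])
    have hqt : qc (b :: t) = pc t := qc_cons b t
    rw [hqt] at hq
    rcases eq_or_ne t [] with rfl | htne
    · have h1 : pc [b] = b := by rw [pc_cons, qc_nil, pc_nil]; ring
      have hk : (k : ℤ) = 0 := by rw [pc_nil] at hq; omega
      have hk0 : k = 0 := by exact_mod_cast hk
      subst hk0
      have hb3 : b = 3 := by rw [h1] at hp; omega
      simp [hb3]
    · have hpq := pq_pos t hgt
      have hqt1 : 1 ≤ qc t := qc_pos t hgt htne
      have hqct : qc t = b * (2 * (k : ℤ) + 1) - (2 * (k : ℤ) + 3) := by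
        have := pc_cons b t; rw [hp, hq] at this; linarith
      have hk1 : 1 ≤ k := by
        by_contra hc
        have hz : k = 0 := by omega
        subst hz
        have h2 : 2 ≤ pc t := by
          have := (pq_pos t hgt).2
          omega
        rw [hq] at h2
        omega
      obtain ⟨k', rfl⟩ : ∃ k', k = k' + 1 := ⟨k - 1, by omega⟩
      have hkz : (1 : ℤ) ≤ ((k' : ℤ) + 1) := by omega
      have hb3 : b = 2 := by
        by_contra hc
        have hbb : 3 ≤ b := by omega
        have h5 : 3 * (2 * ((k' : ℤ) + 1) + 1) ≤ b * (2 * ((k' : ℤ) + 1) + 1) := by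
          apply mul_le_mul_of_nonneg_right hbb
          push_cast; omega
        have hlt := hpq.2
        rw [hq] at hlt
        push_cast at *
        omega
      subst hb3
      have hpt' : pc t = 2 * (k' : ℤ) + 3 := by push_cast at hq ⊢; linarith
      have hqt' : qc t = 2 * (k' : ℤ) + 1 := by push_cast at hqct ⊢; linarith
      have hres := ih k' hgt hpt' hqt'
      rw [hres, List.replicate_succ]
      simp

lemma lemB {l : List ℤ} {d n a : ℤ} (h : IsTChain l d n a) (hh : 3 ≤ l.getD 0 0) :
    l.getD (l.length - 1) 0 = 2 ∨ (∃ k : ℕ, l = 3 :: (List.replicate k 2 ++ [3])) ∨ l = [4] := by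
  obtain ⟨hpc, hqc, hpd, hqd⟩ := master h
  have hne := h.1
  have hg := h.2.1
  have hd := h.2.2.1
  have hn := h.2.2.2.1
  have ha0 := h.2.2.2.2.1
  have han := h.2.2.2.2.2.1
  have hgcd := h.2.2.2.2.2.2.1
  cases l with
  | nil => exact absurd rfl hne
  | cons b t =>
    have hb : 3 ≤ b := by simpa using hh
    have hgt : ∀ x ∈ t, 2 ≤ x := fun x hx => hg x (by simp [hx])
    rcases eq_or_ne t [] with rfl | htne
    · right; right; rw [single h]
    · have hdn : 2 ≤ d * n := by nlinarith
      have hq1 : qc (b :: t) = pc t := qc_cons b t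
      have hpq := pq_pos t hgt
      have hp1 : pc (b :: t) = b * pc t - qc t := pc_cons b t
      have hpos : 1 ≤ pc t := pc_pos t hgt
      have hgta : 2 * qc (b :: t) < pc (b :: t) := by
        rw [hq1, hp1]
        have h5 : 3 * pc t ≤ b * pc t := by
          apply mul_le_mul_of_nonneg_right hb; omega
        omega
      have hn2a : 2 * a ≤ n := by
        by_contra hc
        push_neg at hc
        rw [hpc, hqc] at hgta
        have h6 : d * n * (n - 2 * a) ≤ d * n * (-1) := by
          apply mul_le_mul_of_nonneg_left (by omega) (by omega)
        nlinarith
      set L := (b :: t) with hL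
      have hLne : L ≠ [] := by simp [hL]
      have hu : L.dropLast = b :: t.dropLast := List.dropLast_cons_of_ne_nil htne
      have hune : L.dropLast ≠ [] := by rw [hu]; simp
      have hgu : ∀ x ∈ L.dropLast, 2 ≤ x := fun x hx => hg x ((List.dropLast_sublist L).subset hx)
      have hdec : L = L.dropLast ++ [L.getLast hLne] := (List.dropLast_append_getLast hLne).symm
      obtain ⟨a1, a2, a3, a4⟩ := app L.dropLast (L.getLast hLne)
      rw [← hdec] at a1 a2 a3 a4
      have he2 : 2 ≤ L.getLast hLne := hg _ (List.getLast_mem hLne)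
      rcases eq_or_ne (L.getLast hLne) 2 with he | hee
      · left; rw [getD_last hLne]; exact he
      · have he3 : 3 ≤ L.getLast hLne := by omega
        have hpdu := pd_bounds L.dropLast hgu
        have hpdlt : pd L.dropLast < pc L.dropLast := hpdu.2 hune
        have hpcu : pc L.dropLast = d * n * (n - a) - 1 := by rw [← a3]; exact hpd
        have hpcu1 : 1 ≤ pc L.dropLast := pc_pos _ hgu
        have hgt2 : 2 * pc L.dropLast < pc L := by
          have h5 : 3 * pc L.dropLast ≤ L.getLast hLne * pc L.dropLast := by
            apply mul_le_mul_of_nonneg_right he3; omega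
          omega
        have hn2a' : n = 2 * a := by
          rw [hpc, hpcu] at hgt2
          by_contra hc
          have hc2 : 2 * a ≤ n - 1 := by omega
          have h6 : d * n * (2 * a - n) ≤ d * n * (-1) := by
            apply mul_le_mul_of_nonneg_left (by omega) (by omega)
          nlinarith
        have ha1 : a = 1 := by
          have hdvd : a ∣ (Int.gcd n a : ℤ) := Int.dvd_coe_gcd ⟨2, by omega⟩ dvd_rfl
          rw [hgcd] at hdvd
          have := Int.le_of_dvd one_pos hdvd
          omega
        have hnn : n = 2 := by omega
        rw [hnn] at hpc
        rw [hnn, ha1] at hqc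
        have hpc4 : pc L = 4 * d := by rw [hpc]; ring
        have hqc4 : qc L = 2 * d - 1 := by rw [hqc]; ring
        have hpt : pc t = 2 * d - 1 := by rw [← hq1]; exact hqc4
        have hd2 : 2 ≤ d := by
          by_contra hc
          have hd1 : d = 1 := by omega
          have h7 : 2 ≤ pc t := by
            have := qc_pos t hgt htne
            omega
          rw [hpt, hd1] at h7
          omega
        have hqct : qc t = b * (2 * d - 1) - 4 * d := by
          have := hp1
          rw [hpc4, hpt] at this
          show qc t = _
          linarith
        have hb3 : b = 3 := by
          by_contra hc
          have hbb : 4 ≤ b := by omega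
          have h8 : 4 * (2 * d - 1) ≤ b * (2 * d - 1) := by
            apply mul_le_mul_of_nonneg_right hbb; omega
          have hlt := hpq.2
          rw [hpt] at hlt
          omega
        set k : ℕ := (d - 2).toNat with hk
        have hkk : (k : ℤ) = d - 2 := Int.toNat_of_nonneg (by omega)
        have hsh := shape t k hgt (by rw [hpt, hkk]; ring) (by rw [hqct, hb3, hkk]; ring)
        right; left
        exact ⟨k, by rw [hL, hb3, hsh]⟩
end TC

open TC in
/-- If a T-chain starts with exactly s ≥ 1 entries equal to 2
(so b_1 = ⋯ = b_s = 2 and b_{s+1} ≥ 3), then exactly one of: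
(i) b_r = s+2; (ii) the chain is [2^s, 3, 2^{r−s−2}, s+3];
(iii) r = s+1 and b_r = s+4. (Lists are 0-indexed via getD.) -/
theorem tchain_trichotomy (l : List ℤ) (d n a : ℤ) (h : IsTChain l d n a)
    (s : ℕ) (hs1 : 1 ≤ s) (hsr : s < l.length)
    (h2 : ∀ i < s, l.getD i 0 = 2) (h3 : 3 ≤ l.getD s 0) :
    let r := l.length
    let P1 := l.getD (r - 1) 0 = (s : ℤ) + 2
    let P2 := l.getD s 0 = 3 ∧ (∀ i, s + 1 ≤ i → i < r - 1 → l.getD i 0 = 2) ∧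
      l.getD (r - 1) 0 = (s : ℤ) + 3
    let P3 := r = s + 1 ∧ l.getD (r - 1) 0 = (s : ℤ) + 4
    (P1 ∧ ¬P2 ∧ ¬P3) ∨ (¬P1 ∧ P2 ∧ ¬P3) ∨ (¬P1 ∧ ¬P2 ∧ P3) := by
  intro r P1 P2 P3
  obtain ⟨d', n', a', hC⟩ := strip s l d n a h (by omega) h2
  have hdl : l.dropLast.length = l.length - 1 := List.length_dropLast
  set C := l.dropLast.drop s ++ [l.getD (l.length - 1) 0 - (s : ℤ)] with hCdef
  have hClen : C.length = l.length - s := by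
    rw [hCdef]; simp; omega
  rcases eq_or_lt_of_le (by omega : s + 1 ≤ l.length) with hr1 | hr2
  · -- r = s + 1 : case P3
    have hnil : l.dropLast.drop s = [] := by
      apply List.eq_nil_of_length_eq_zero; simp; omega
    rw [hCdef, hnil, List.nil_append] at hC
    have h4 := single hC
    have hL : l.getD (l.length - 1) 0 = (s : ℤ) + 4 := by omega
    refine Or.inr (Or.inr ⟨?_, ?_, ?_⟩)
    · intro hp
      have h' : l.getD (l.length - 1) 0 = (s : ℤ) + 2 := hp
      omega
    · intro hp
      have h' : l.getD (l.length - 1) 0 = (s : ℤ) + 3 := hp.2.2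
      omega
    · exact ⟨hr1.symm, hL⟩
  · -- r ≥ s + 2
    have hCne : C ≠ [] := by rw [hCdef]; simp
    have hlast : C.getD (C.length - 1) 0 = l.getD (l.length - 1) 0 - (s : ℤ) := by
      rw [getD_last hCne]
      simp only [hCdef, List.getLast_append]
      simp
    have hC0 : C.getD 0 0 = l.getD s 0 := by
      have h0 : 0 < (l.dropLast.drop s).length := by simp; omega
      rw [hCdef, List.getD_eq_getElem _ _ (by simp <;> omega), List.getElem_append_left h0,
        List.getElem_drop, List.getElem_dropLast, List.getD_eq_getElem _ _ (by omega : s < l.length)]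
      simp
    have hB := lemB hC (by rw [hC0]; exact h3)
    rcases hB with hB | ⟨k, hk⟩ | hB
    · -- ends in 2 : case P1
      rw [hlast] at hB
      have hL2 : l.getD (l.length - 1) 0 = (s : ℤ) + 2 := by omega
      refine Or.inl ⟨hL2, ?_, ?_⟩
      · intro hp
        have h' : l.getD (l.length - 1) 0 = (s : ℤ) + 3 := hp.2.2
        omega
      · intro hp
        have h' : l.length = s + 1 := hp.1
        omega
    · -- shape case : P2
      have hlen2 : C.length = k + 2 := by rw [hk]; simp
      have hgd_s : l.getD s 0 = 3 := by
        rw [← hC0, hk]; rfl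
      have h5 : C.getD (C.length - 1) 0 = 3 := by
        rw [hk, getD_last (by simp : (3 :: (List.replicate k 2 ++ [3]) : List ℤ) ≠ []),
          List.getLast_cons (by simp)]
        exact List.getLast_append _
      rw [hlast] at h5
      have hlast3 : l.getD (l.length - 1) 0 = (s : ℤ) + 3 := by omega
      have hmid : ∀ i, s + 1 ≤ i → i < l.length - 1 → l.getD i 0 = 2 := by
        intro i hi1 hi2
        have hCi : C.getD (i - s) 0 = l.getD i 0 := by
          rw [hCdef, List.getD_eq_getElem _ _ (by simp <;> omega),
            List.getElem_append_left (by simp <;> omega : i - s < (l.dropLast.drop s).length),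
            List.getElem_drop, List.getElem_dropLast,
            List.getD_eq_getElem _ _ (by omega : i < l.length)]
          congr 1
          omega
        have hCi2 : C.getD (i - s) 0 = 2 := by
          obtain ⟨j, hj'⟩ : ∃ j, i - s = j + 1 := ⟨i - s - 1, by omega⟩
          rw [hk, hj', List.getD_eq_getElem _ _ (by simp <;> omega),
            List.getElem_cons_succ,
            List.getElem_append_left (by simp <;> omega : j < (List.replicate k (2:ℤ)).length)]
          exact List.getElem_replicate ..
        rw [← hCi, hCi2]
      refine Or.inr (Or.inl ⟨?_, ⟨hgd_s, hmid, hlast3⟩, ?_⟩)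
      · intro hp
        have h' : l.getD (l.length - 1) 0 = (s : ℤ) + 2 := hp
        omega
      · intro hp
        have h' : l.length = s + 1 := hp.1
        omega
    · exfalso
      have : C.length = 1 := by rw [hB]; rfl
      omega
end

section
/- Let b_1, …, b_r be a T-chain with r ≥ 2 and parameters (d, n, a) with n ≥ 3. Then exactly one of b_1, b_r is equal to 2 (a T-chain of index at least 3 has a 2 at exactly one of its two ends). -/
/-!
Write `[b₁, …, b_r] = p / q` through the product `M` of the matrices `!![b, -1; 1, 0]`: then
`M = !![p, -p'; q, _]` with `[b_r, …, b₁] = p / p'`, `det M = 1`, and `0 < q, p' < p` once `r ≥ 1`.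
Peeling off the first (last) matrix shows `b₁ = 2 ↔ p < 2q` and `b_r = 2 ↔ p < 2p'` when `r ≥ 2`.
For a T-chain, `p / q = d n² / (d n a - 1)` is in lowest terms, so `p = d n²` and `q = d n a - 1`;
the determinant makes `p'` an inverse of `q` modulo `p`, as is `d n (n - a) - 1`, and both lie
in `(0, p)`, so `p' = d n (n - a) - 1`. Thus `b₁ = 2 ↔ n < 2a` and `b_r = 2 ↔ 2a < n`, and `n ≠ 2a` since
`gcd(n, a) = 1` and `n ≥ 3`.
-/

def contMat (l : List ℤ) : Matrix (Fin 2) (Fin 2) ℤ :=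
  (l.map fun b => !![b, -1; 1, 0]).prod

namespace contMat

variable (b : ℤ) (l : List ℤ)

lemma cons : contMat (b :: l) = !![b, -1; 1, 0] * contMat l := by
  simp [contMat]

lemma concat : contMat (l ++ [b]) = contMat l * !![b, -1; 1, 0] := by
  simp [contMat]

lemma det_eq_one : (contMat l).det = 1 := by
  induction l with
  | nil => simp [contMat]
  | cons b l ih => rw [cons, Matrix.det_mul, ih, Matrix.det_fin_two_of]; ring

lemma cons_zero_zero : contMat (b :: l) 0 0 = b * contMat l 0 0 - contMat l 1 0 := by
  simp [cons, Matrix.mul_apply, Fin.sum_univ_two, sub_eq_add_neg]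

lemma cons_one_zero : contMat (b :: l) 1 0 = contMat l 0 0 := by
  simp [cons, Matrix.mul_apply, Fin.sum_univ_two]

lemma concat_zero_zero : contMat (l ++ [b]) 0 0 = b * contMat l 0 0 + contMat l 0 1 := by
  simp [concat, Matrix.mul_apply, Fin.sum_univ_two, mul_comm]

lemma concat_zero_one : contMat (l ++ [b]) 0 1 = -contMat l 0 0 := by
  simp [concat, Matrix.mul_apply, Fin.sum_univ_two]

variable {l}

lemma one_zero_lt_zero_zero (hl : ∀ c ∈ l, 2 ≤ c) :
    0 ≤ contMat l 1 0 ∧ contMat l 1 0 < contMat l 0 0 := by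
  induction l with
  | nil => simp [contMat]
  | cons b l ih =>
    obtain ⟨h0, hlt⟩ := ih fun c hc => hl c (List.mem_cons_of_mem b hc)
    have hb := hl b List.mem_cons_self
    rw [cons_zero_zero, cons_one_zero]
    constructor <;> nlinarith

lemma neg_zero_one_lt_zero_zero (hl : ∀ c ∈ l, 2 ≤ c) :
    0 ≤ -contMat l 0 1 ∧ -contMat l 0 1 < contMat l 0 0 := by
  induction l using List.reverseRecOn with
  | nil => simp [contMat]
  | append_singleton l b ih =>
    obtain ⟨h0, hlt⟩ := ih fun c hc => hl c (List.mem_append_left [b] hc)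
    have hb := hl b (List.mem_append_right l (List.mem_singleton_self b))
    rw [concat_zero_zero, concat_zero_one]
    constructor <;> nlinarith

lemma one_zero_pos (hl : ∀ c ∈ l, 2 ≤ c) (hne : l ≠ []) : 0 < contMat l 1 0 := by
  obtain ⟨b, l, rfl⟩ := List.exists_cons_of_ne_nil hne
  obtain ⟨h0, hlt⟩ := one_zero_lt_zero_zero fun c hc => hl c (List.mem_cons_of_mem b hc)
  rw [cons_one_zero]
  omega

lemma zero_one_neg (hl : ∀ c ∈ l, 2 ≤ c) (hne : l ≠ []) : contMat l 0 1 < 0 := by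
  induction l using List.reverseRecOn with
  | nil => contradiction
  | append_singleton l b _ =>
    obtain ⟨h0, hlt⟩ := neg_zero_one_lt_zero_zero fun c hc => hl c (List.mem_append_left [b] hc)
    rw [concat_zero_one]
    omega

lemma hjcf_eq_div (hl : ∀ c ∈ l, 2 ≤ c) : hjcf l = contMat l 0 0 / contMat l 1 0 := by
  induction l with
  | nil => simp [hjcf, contMat]
  | cons b l ih =>
    have hl' : ∀ c ∈ l, 2 ≤ c := fun c hc => hl c (List.mem_cons_of_mem b hc)
    obtain ⟨h0, hlt⟩ := one_zero_lt_zero_zero hl'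
    have hpos : (contMat l 0 0 : ℚ) ≠ 0 := by exact_mod_cast (h0.trans_lt hlt).ne'
    rw [hjcf, ih hl', inv_div, cons_zero_zero, cons_one_zero]
    push_cast
    field_simp

lemma isCoprime_zero_zero_one_zero : IsCoprime (contMat l 0 0) (contMat l 1 0) :=
  ⟨contMat l 1 1, -contMat l 0 1, by rw [← det_eq_one l, Matrix.det_fin_two]; ring⟩

lemma head_eq_two_iff (hl : ∀ c ∈ b :: l, 2 ≤ c) (hne : l ≠ []) :
    b = 2 ↔ contMat (b :: l) 0 0 < 2 * contMat (b :: l) 1 0 := by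
  have hl' : ∀ c ∈ l, 2 ≤ c := fun c hc => hl c (List.mem_cons_of_mem b hc)
  have hb := hl b List.mem_cons_self
  have hpos := one_zero_pos hl' hne
  have hlt := (one_zero_lt_zero_zero hl').2
  rw [cons_zero_zero, cons_one_zero]
  constructor
  · rintro rfl; linarith
  · intro h; nlinarith

lemma last_eq_two_iff (hl : ∀ c ∈ l ++ [b], 2 ≤ c) (hne : l ≠ []) :
    b = 2 ↔ contMat (l ++ [b]) 0 0 < 2 * -contMat (l ++ [b]) 0 1 := by
  have hl' : ∀ c ∈ l, 2 ≤ c := fun c hc => hl c (List.mem_append_left [b] hc)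
  have hb := hl b (List.mem_append_right l (List.mem_singleton_self b))
  have hneg := zero_one_neg hl' hne
  have hlt := (neg_zero_one_lt_zero_zero hl').2
  rw [concat_zero_zero, concat_zero_one]
  constructor
  · rintro rfl; linarith
  · intro h; nlinarith

lemma getD_zero_eq_two_iff (hl : ∀ c ∈ l, 2 ≤ c) (hr : 2 ≤ l.length) :
    l.getD 0 0 = 2 ↔ contMat l 0 0 < 2 * contMat l 1 0 := by
  cases l with
  | nil => simp at hr
  | cons b l => exact head_eq_two_iff b hl (by rintro rfl; simp at hr)

lemma getD_last_eq_two_iff (hl : ∀ c ∈ l, 2 ≤ c) (hr : 2 ≤ l.length) :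
    l.getD (l.length - 1) 0 = 2 ↔ contMat l 0 0 < 2 * -contMat l 0 1 := by
  induction l using List.reverseRecOn with
  | nil => simp at hr
  | append_singleton l b _ =>
    have hb : (l ++ [b]).getD ((l ++ [b]).length - 1) 0 = b := by simp
    rw [hb]
    exact last_eq_two_iff b hl (by rintro rfl; simp at hr)

end contMat

lemma mul_sq_lt_two_mul_sub_one_iff {d n a : ℤ} (hdn : 3 ≤ d * n) :
    d * n ^ 2 < 2 * (d * n * a - 1) ↔ n < 2 * a := by
  constructor
  · intro h
    by_contra! hle
    nlinarith [mul_nonneg (by omega : 0 ≤ d * n) (by omega : 0 ≤ n - 2 * a)]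
  · intro h
    nlinarith [mul_le_mul_of_nonneg_left (by omega : 1 ≤ 2 * a - n) (by omega : 0 ≤ d * n)]

namespace IsTChain

variable {l : List ℤ} {d n a : ℤ}

lemma contMat_eq (h : IsTChain l d n a) :
    contMat l 0 0 = d * n ^ 2 ∧ contMat l 1 0 = d * n * a - 1 := by
  obtain ⟨hne, hl, hd, hn, ha, -, -, hval⟩ := h
  have hq : 0 < d * n * a - 1 := by
    have : 2 ≤ d * n := by nlinarith
    nlinarith
  have hcop : IsCoprime (d * n ^ 2) (d * n * a - 1) := by
    have hdn : IsCoprime (d * n) (d * n * a - 1) := ⟨a, -1, by ring⟩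
    have hn : IsCoprime n (d * n * a - 1) := ⟨d * a, -1, by ring⟩
    simpa [sq, mul_assoc] using hdn.mul_left hn
  rw [contMat.hjcf_eq_div hl] at hval
  exact Rat.div_int_inj (contMat.one_zero_pos hl hne) hq
    (Int.isCoprime_iff_gcd_eq_one.mp contMat.isCoprime_zero_zero_one_zero)
    (Int.isCoprime_iff_gcd_eq_one.mp hcop) (by exact_mod_cast hval)

lemma neg_contMat_zero_one (h : IsTChain l d n a) :
    -contMat l 0 1 = d * n * (n - a) - 1 := by
  obtain ⟨hp, hq⟩ := h.contMat_eq
  obtain ⟨hne, hl, hd, hn, ha, han, -, -⟩ := h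
  have hdet := contMat.det_eq_one l
  rw [Matrix.det_fin_two, hp, hq] at hdet
  have hcop := hp ▸ hq ▸ contMat.isCoprime_zero_zero_one_zero (l := l)
  have hdvd : d * n ^ 2 ∣ -contMat l 0 1 - (d * n * (n - a) - 1) :=
    hcop.dvd_of_dvd_mul_right ⟨1 - d * a * (n - a) - contMat l 1 1, by linear_combination hdet⟩
  have hu := contMat.zero_one_neg hl hne
  have hu' := hp ▸ (contMat.neg_zero_one_lt_zero_zero hl).2
  have hB : 0 < d * n * (n - a) - 1 := by nlinarith
  have hB' : d * n * (n - a) - 1 < d * n ^ 2 := by nlinarith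
  have := Int.eq_zero_of_abs_lt_dvd hdvd (abs_sub_lt_iff.mpr ⟨by linarith, by linarith⟩)
  linarith

end IsTChain

/-- A T-chain of length r ≥ 2 with index n ≥ 3 has a 2 at exactly
one of its two ends. -/
theorem tchain_exactly_one_end_two (l : List ℤ) (d n a : ℤ) (h : IsTChain l d n a)
    (hr : 2 ≤ l.length) (hn : 3 ≤ n) :
    Xor' (l.getD 0 0 = 2) (l.getD (l.length - 1) 0 = 2) := by
  obtain ⟨hp, hq⟩ := h.contMat_eq
  have hu := h.neg_contMat_zero_one
  obtain ⟨-, hl, hd, -, -, -, hgcd, -⟩ := h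
  have hdn : 3 ≤ d * n := by nlinarith
  have hn2a : n ≠ 2 * a := by
    rintro rfl
    rw [Int.gcd_mul_left_left] at hgcd
    omega
  rw [contMat.getD_zero_eq_two_iff hl hr, contMat.getD_last_eq_two_iff hl hr, hp, hq,
    hu, mul_sq_lt_two_mul_sub_one_iff hdn, mul_sq_lt_two_mul_sub_one_iff hdn]
  exact xor_iff_iff_not.mpr (by omega)
end

section
/- Let b_1, …, b_r be a T-chain with parameters (d, n, a). Then the reversed list b_r, …, b_1 is a T-chain with parameters (d, n, n − a); that is, [b_r, …, b_1] = dn²/(dn(n−a) − 1). -/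
/-!
`hjcf [b₁, …, b_r] = p / q`, where `(p, q)` is the first column of `M(b₁)⋯M(b_r)` with
`M(b) = !![b, -1; 1, 0]`; write `(-x, -y)` for its second column. The product has determinant 1,
and `M(b)ᵀ` is conjugate to `M(b)` by `diag(1, -1)`, so the product for the reversed list is
`!![p, -q; x, -y]` and `hjcf [b_r, …, b₁] = p / x`, with `0 ≤ x < p`. For a T-chain both
`p / q` and `d n² / (d n a - 1)` are reduced, hence `p = d n²` and `q = d n a - 1`; the
determinant says `x q ≡ 1 [ZMOD p]`, and the inverse of `d n a - 1` modulo `d n²` in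
`[0, d n²)` is `d n (n - a) - 1`.
-/

open Matrix

/-- The matrix of the Möbius map `t ↦ b - 1 / t`. -/
def hjMatrix (b : ℤ) : Matrix (Fin 2) (Fin 2) ℤ := !![b, -1; 1, 0]

def continuantMatrix (l : List ℤ) : Matrix (Fin 2) (Fin 2) ℤ := (l.map hjMatrix).prod

def signFlip : Matrix (Fin 2) (Fin 2) ℤ := !![1, 0; 0, -1]

@[simp]
lemma continuantMatrix_nil : continuantMatrix [] = 1 := rfl

lemma continuantMatrix_cons (b : ℤ) (l : List ℤ) :
    continuantMatrix (b :: l) = hjMatrix b * continuantMatrix l := List.prod_cons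

@[simp]
lemma continuantMatrix_cons_zero (b : ℤ) (l : List ℤ) (j : Fin 2) :
    continuantMatrix (b :: l) 0 j = b * continuantMatrix l 0 j - continuantMatrix l 1 j := by
  simp [continuantMatrix_cons, hjMatrix, mul_apply, Fin.sum_univ_two, sub_eq_add_neg]

@[simp]
lemma continuantMatrix_cons_one (b : ℤ) (l : List ℤ) (j : Fin 2) :
    continuantMatrix (b :: l) 1 j = continuantMatrix l 0 j := by
  simp [continuantMatrix_cons, hjMatrix, mul_apply, Fin.sum_univ_two]

lemma det_continuantMatrix (l : List ℤ) : (continuantMatrix l).det = 1 := by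
  induction l with
  | nil => simp
  | cons b l ih =>
    rw [continuantMatrix_cons, det_mul, ih, mul_one, hjMatrix, det_fin_two_of]
    ring

lemma continuantMatrix_reverse (l : List ℤ) :
    continuantMatrix l.reverse = signFlip * (continuantMatrix l)ᵀ * signFlip := by
  have hflip (X : Matrix (Fin 2) (Fin 2) ℤ) : signFlip * (signFlip * X) = X := by
    ext i j; fin_cases i <;> fin_cases j <;>
      simp [signFlip, mul_apply, vecMul, dotProduct, Fin.sum_univ_two]
  have hconj (b : ℤ) : signFlip * (hjMatrix b)ᵀ * signFlip = hjMatrix b := by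
    ext i j; fin_cases i <;> fin_cases j <;>
      simp [signFlip, hjMatrix, mul_apply, vecMul, dotProduct, Fin.sum_univ_two]
  induction l with
  | nil => simpa using (hflip 1).symm
  | cons b l ih =>
    rw [List.reverse_cons, continuantMatrix, List.map_append, List.prod_append,
      ← continuantMatrix, ih, List.map_singleton, List.prod_singleton, continuantMatrix_cons,
      transpose_mul]
    conv_lhs => rw [← hconj b]
    simp only [Matrix.mul_assoc, hflip]

lemma continuantMatrix_reverse_zero_zero (l : List ℤ) :
    continuantMatrix l.reverse 0 0 = continuantMatrix l 0 0 := by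
  simp [continuantMatrix_reverse, signFlip, mul_apply, vecMul, dotProduct, Fin.sum_univ_two]

lemma continuantMatrix_reverse_one_zero (l : List ℤ) :
    continuantMatrix l.reverse 1 0 = -continuantMatrix l 0 1 := by
  simp [continuantMatrix_reverse, signFlip, mul_apply, vecMul, dotProduct, Fin.sum_univ_two]

lemma isCoprime_continuantMatrix_zero_one_zero (l : List ℤ) :
    IsCoprime (continuantMatrix l 0 0) (continuantMatrix l 1 0) := by
  have h := det_continuantMatrix l
  rw [det_fin_two] at h
  exact ⟨continuantMatrix l 1 1, -continuantMatrix l 0 1, by linarith⟩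

lemma neg_continuantMatrix_zero_one_mul_modEq_one (l : List ℤ) :
    -continuantMatrix l 0 1 * continuantMatrix l 1 0 ≡ 1 [ZMOD continuantMatrix l 0 0] := by
  have h := det_continuantMatrix l
  rw [det_fin_two] at h
  exact Int.modEq_iff_dvd.mpr ⟨continuantMatrix l 1 1, by linarith⟩

lemma continuantMatrix_one_zero_nonneg_lt {l : List ℤ} (h : ∀ b ∈ l, 2 ≤ b) :
    0 ≤ continuantMatrix l 1 0 ∧ continuantMatrix l 1 0 < continuantMatrix l 0 0 := by
  induction l with
  | nil => simp
  | cons b t ih =>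
    obtain ⟨hq, hqp⟩ := ih fun c hc ↦ h c (List.mem_cons_of_mem b hc)
    have hb := h b List.mem_cons_self
    simp only [continuantMatrix_cons_zero, continuantMatrix_cons_one]
    constructor <;> nlinarith

lemma continuantMatrix_one_zero_pos {l : List ℤ} (h : ∀ b ∈ l, 2 ≤ b) (hne : l ≠ []) :
    0 < continuantMatrix l 1 0 := by
  obtain ⟨b, t, rfl⟩ := List.exists_cons_of_ne_nil hne
  obtain ⟨hq, hqp⟩ :=
    continuantMatrix_one_zero_nonneg_lt fun c hc ↦ h c (List.mem_cons_of_mem b hc)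
  simpa using hq.trans_lt hqp

lemma hjcf_eq_div_s6 {l : List ℤ} (h : ∀ b ∈ l, 2 ≤ b) :
    hjcf l = (continuantMatrix l 0 0 : ℚ) / continuantMatrix l 1 0 := by
  induction l with
  | nil => simp [hjcf]
  | cons b t ih =>
    have ht : ∀ c ∈ t, 2 ≤ c := fun c hc ↦ h c (List.mem_cons_of_mem b hc)
    obtain ⟨hq, hqp⟩ := continuantMatrix_one_zero_nonneg_lt ht
    have hp : (continuantMatrix t 0 0 : ℚ) ≠ 0 := by exact_mod_cast (hq.trans_lt hqp).ne'
    rw [hjcf, ih ht, inv_div, continuantMatrix_cons_zero, continuantMatrix_cons_one]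
    push_cast
    field_simp

lemma Int.eq_of_mul_modEq_one {p q x y : ℤ} (hx₀ : 0 ≤ x) (hxp : x < p) (hy₀ : 0 ≤ y)
    (hyp : y < p) (hx : x * q ≡ 1 [ZMOD p]) (hy : y * q ≡ 1 [ZMOD p]) : x = y := by
  have hxy : x ≡ y [ZMOD p] :=
    calc x = x * 1 := (mul_one x).symm
      _ ≡ x * (y * q) [ZMOD p] := hy.symm.mul_left x
      _ = y * (x * q) := by ring
      _ ≡ y * 1 [ZMOD p] := hx.mul_left y
      _ = y := mul_one y
  rw [← Int.emod_eq_of_lt hx₀ hxp, ← Int.emod_eq_of_lt hy₀ hyp]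
  exact hxy

lemma isCoprime_tchain_num_den (d n a : ℤ) : IsCoprime (d * n ^ 2) (d * n * a - 1) :=
  ⟨d * a ^ 2, -(d * n * a) - 1, by ring⟩

lemma tchain_reverse_den_mul_den_modEq_one (d n a : ℤ) :
    (d * n * (n - a) - 1) * (d * n * a - 1) ≡ 1 [ZMOD d * n ^ 2] :=
  Int.modEq_iff_dvd.mpr ⟨-(d * a * (n - a) - 1), by ring⟩

/-- The reverse of a T-chain with parameters (d, n, a) is a
T-chain with parameters (d, n, n − a). -/
theorem tchain_reverse (l : List ℤ) (d n a : ℤ) (h : IsTChain l d n a) :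
    IsTChain l.reverse d n (n - a) := by
  obtain ⟨hne, hge, hd, hn, ha, han, hgcd, hval⟩ := h
  have hge' : ∀ b ∈ l.reverse, 2 ≤ b := by simpa using hge
  have hdn : 2 ≤ d * n := by nlinarith
  have hden : 0 < d * n * a - 1 := by nlinarith
  obtain ⟨hp, hq⟩ :
      continuantMatrix l 0 0 = d * n ^ 2 ∧ continuantMatrix l 1 0 = d * n * a - 1 :=
    Rat.div_int_inj (continuantMatrix_one_zero_pos hge hne) hden
      (Int.isCoprime_iff_gcd_eq_one.mp (isCoprime_continuantMatrix_zero_one_zero l))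
      (Int.isCoprime_iff_gcd_eq_one.mp (isCoprime_tchain_num_den d n a))
      (by rw [← hjcf_eq_div_s6 hge]; exact_mod_cast hval)
  have hx : -continuantMatrix l 0 1 = d * n * (n - a) - 1 := by
    have hbounds := continuantMatrix_one_zero_nonneg_lt hge'
    rw [continuantMatrix_reverse_zero_zero, continuantMatrix_reverse_one_zero, hp] at hbounds
    have hmod := neg_continuantMatrix_zero_one_mul_modEq_one l
    rw [hp, hq] at hmod
    exact Int.eq_of_mul_modEq_one hbounds.1 hbounds.2 (by nlinarith) (by nlinarith) hmod
      (tchain_reverse_den_mul_den_modEq_one d n a)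
  refine ⟨by simpa using hne, hge', hd, hn, by omega, by omega,
    by rwa [Int.gcd_self_sub_right], ?_⟩
  rw [hjcf_eq_div_s6 hge', continuantMatrix_reverse_zero_zero, continuantMatrix_reverse_one_zero,
    hp, hx]
  push_cast
  ring
end

section
/- For all integers s ≥ 0 and t ≥ 0, the chain [2^s, 3, 2^t, s+3] (s entries 2, then a 3, then t entries 2, then one entry s+3, of length r = s+t+2) has Hirzebruch–Jung continued fraction (t+2)(s+2)² / ((t+2)(s+2)(s+1) − 1); hence it is a T-chain with parameters (d, n, a) = (t+2, s+2, s+1). -/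
/-!
Write the value of a tail of the chain as `p / q`. Prepending an entry `b` turns it into
`(b p - q) / p`; for `b = 2` the difference `p - q` is preserved, so a block of `k` twos
simply adds `k (p - q)` to numerator and denominator. Evaluating the chain from the right,
`[s+3] = (s+3)/1`, then `2^t`, then `3`, then `2^s`, gives the stated fraction, whose shape
is that of a T-chain with `n = s + 2` and `a = s + 1` coprime.
-/

lemma hjcf_cons_of_eq_div {l : List ℤ} {p q : ℚ} (hl : hjcf l = p / q) (hp : p ≠ 0) (b : ℤ) :
    hjcf (b :: l) = (b * p - q) / p := by
  rw [hjcf, hl, inv_div, sub_div' hp]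

lemma hjcf_replicate_two_append {l : List ℤ} {p q : ℚ} (hl : hjcf l = p / q) (hp : 0 < p)
    (hqp : q ≤ p) (k : ℕ) :
    hjcf (List.replicate k 2 ++ l) = (p + k * (p - q)) / (q + k * (p - q)) := by
  induction k with
  | zero => simpa using hl
  | succ k ih =>
    have hpos : 0 < p + k * (p - q) := by
      have : (0 : ℚ) ≤ k * (p - q) := mul_nonneg k.cast_nonneg (sub_nonneg.mpr hqp)
      linarith
    rw [List.replicate_succ, List.cons_append, hjcf_cons_of_eq_div ih hpos.ne']
    push_cast
    congr 1 <;> ring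

theorem hjcf_replicate_two_three_replicate_two (s t : ℕ) :
    hjcf (List.replicate s 2 ++ 3 :: (List.replicate t 2 ++ [(s : ℤ) + 3])) =
      ((t : ℚ) + 2) * ((s : ℚ) + 2) ^ 2 / (((t : ℚ) + 2) * ((s : ℚ) + 2) * ((s : ℚ) + 1) - 1) := by
  have hs : (0 : ℚ) ≤ s := s.cast_nonneg
  have ht : (0 : ℚ) ≤ t := t.cast_nonneg
  have hst : (0 : ℚ) ≤ t * s := mul_nonneg ht hs
  have h_last : hjcf [(s : ℤ) + 3] = ((s : ℚ) + 3) / 1 := by simp [hjcf]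
  have h_twos := hjcf_replicate_two_append h_last (by positivity) (by linarith) t
  have h_three := hjcf_cons_of_eq_div h_twos (by linarith) 3
  push_cast at h_three
  rw [hjcf_replicate_two_append h_three (by linarith) (by linarith) s]
  congr 1 <;> ring

/-- For s, t ≥ 0, the chain [2^s, 3, 2^t, s+3] has HJ continued
fraction (t+2)(s+2)² / ((t+2)(s+2)(s+1) − 1), hence is a T-chain with
parameters (t+2, s+2, s+1). -/
theorem general_tchain (s t : ℕ) :
    let c : List ℤ := List.replicate s 2 ++ 3 :: (List.replicate t 2 ++ [(s : ℤ) + 3])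
    hjcf c = ((t : ℚ) + 2) * ((s : ℚ) + 2) ^ 2 /
      (((t : ℚ) + 2) * ((s : ℚ) + 2) * ((s : ℚ) + 1) - 1) ∧
    IsTChain c ((t : ℤ) + 2) ((s : ℤ) + 2) ((s : ℤ) + 1) := by
  intro c
  have hc := hjcf_replicate_two_three_replicate_two s t
  refine ⟨hc, by simp [c], ?_, by omega, by omega, by omega, by omega,
    Int.isCoprime_iff_gcd_eq_one.mp ⟨1, -1, by ring⟩, ?_⟩
  · intro b hb
    simp only [c, List.mem_append, List.mem_replicate, List.mem_cons, List.not_mem_nil, or_false] at hb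
    omega
  · rw [hc]
    push_cast
    ring
end
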